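/- arXiv:1602.05755 — 7 statements merged into one kernel-verified Lean document; each statement's English description precedes it below -/
import Mathlib

section
/- The matrix elements of the free discrete Schrödinger evolution satisfy |⟨x|T_r|y⟩| ≤ min(1, e^{4|r|} (4|r|)^{|x−y|} / |x−y|!) for all x, y ∈ ℤ and r ∈ ℝ. -/
open Complex Real intervalIntegral MeasureTheory

/-- The discrete Laplacian on `ℤ`. -/
noncomputable def lap (f : ℤ → ℂ) : ℤ → ℂ := fun x => f (x + 1) - 2 * f x + f (x - 1)

/-- The free discrete Schrödinger evolution `T_r = e^{irΔ}`, given by its power series. -/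
noncomputable def Tr (r : ℝ) (f : ℤ → ℂ) : ℤ → ℂ := fun x =>
  ∑' n : ℕ, ((Complex.I * (r : ℂ)) ^ n / (n.factorial : ℂ)) * (lap^[n] f x)

lemma lap_apply (f : ℤ → ℂ) (z : ℤ) : lap f z = f (z+1) - 2 * f z + f (z-1) := rfl

lemma lap_iter_norm_le (y : ℤ) (n : ℕ) (z : ℤ) :
    ‖lap^[n] (fun w => if w = y then (1:ℂ) else 0) z‖ ≤ 4 ^ n := by
  induction n generalizing z with
  | zero => simp only [Function.iterate_zero, id, pow_zero]; split <;> simp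
  | succ n ih =>
    rw [Function.iterate_succ_apply', lap_apply]
    calc ‖_ - _ + _‖ ≤ ‖lap^[n] _ (z+1) - 2 * lap^[n] _ z‖ + ‖lap^[n] _ (z-1)‖ := norm_add_le _ _
    _ ≤ ‖lap^[n] _ (z+1)‖ + ‖(2:ℂ)‖ * ‖lap^[n] _ z‖ + ‖lap^[n] _ (z-1)‖ := by
        gcongr
        exact (norm_sub_le _ _).trans (by rw [norm_mul])
    _ ≤ 4^n + 2 * 4^n + 4^n := by
        have h2 : ‖(2:ℂ)‖ = 2 := by norm_num
        rw [h2]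
        gcongr <;> [exact ih _; exact ih _; exact ih _]
    _ = 4 ^ (n+1) := by ring

lemma lap_iter_eq_zero (y : ℤ) (n : ℕ) (z : ℤ) (h : n < (z - y).natAbs) :
    lap^[n] (fun w => if w = y then (1:ℂ) else 0) z = 0 := by
  induction n generalizing z with
  | zero => simp only [Function.iterate_zero, id]; rw [if_neg]; omega
  | succ n ih =>
    rw [Function.iterate_succ_apply', lap_apply,
      ih (z+1) (by omega), ih z (by omega), ih (z-1) (by omega)]
    ring

lemma term_norm_le (r : ℝ) (x y : ℤ) (n : ℕ) :
    ‖((Complex.I * (r : ℂ)) ^ n / (n.factorial : ℂ)) *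
      (lap^[n] (fun w => if w = y then (1:ℂ) else 0) x)‖ ≤ (4*|r|) ^ n / n.factorial := by
  rw [norm_mul, norm_div, norm_pow, norm_mul, Complex.norm_I, one_mul, Complex.norm_real,
    Real.norm_eq_abs, Complex.norm_natCast]
  rw [mul_pow]
  have h1 := lap_iter_norm_le y n x
  have h2 : (0:ℝ) < n.factorial := by positivity
  rw [div_mul_eq_mul_div, mul_comm ((4:ℝ)^n)]
  gcongr

lemma summable_bound (r : ℝ) : Summable (fun n : ℕ => (4*|r|) ^ n / (n.factorial : ℝ)) :=
  Real.summable_pow_div_factorial _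

lemma summable_term_norm (r : ℝ) (x y : ℤ) :
    Summable (fun n : ℕ => ‖((Complex.I * (r : ℂ)) ^ n / (n.factorial : ℂ)) *
      (lap^[n] (fun w => if w = y then (1:ℂ) else 0) x)‖) := by
  apply Summable.of_nonneg_of_le (fun n => norm_nonneg _) (fun n => term_norm_le r x y n)
    (summable_bound r)

theorem norm_Tr_le_exp (r : ℝ) (x y : ℤ) :
    ‖Tr r (fun z => if z = y then (1 : ℂ) else 0) x‖ ≤
      Real.exp (4 * |r|) * (4 * |r|) ^ (x - y).natAbs / ((x - y).natAbs.factorial : ℝ) := by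
  set d := (x - y).natAbs with hd
  calc ‖Tr r _ x‖ ≤ ∑' n : ℕ, ‖((Complex.I * (r : ℂ)) ^ n / (n.factorial : ℂ)) *
        (lap^[n] (fun w => if w = y then (1:ℂ) else 0) x)‖ :=
      norm_tsum_le_tsum_norm (summable_term_norm r x y)
  _ ≤ Real.exp (4 * |r|) * (4 * |r|) ^ d / (d.factorial : ℝ) := by
      set a : ℕ → ℝ := fun n => ‖((Complex.I * (r : ℂ)) ^ n / (n.factorial : ℂ)) *
        (lap^[n] (fun w => if w = y then (1:ℂ) else 0) x)‖ with ha
      have hsum := summable_term_norm r x y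
      rw [← Summable.sum_add_tsum_nat_add d hsum]
      have hz : ∑ i ∈ Finset.range d, a i = 0 := by
        apply Finset.sum_eq_zero
        intro i hi
        simp only [ha]
        rw [lap_iter_eq_zero y i x (by simp only [Finset.mem_range] at hi; omega), mul_zero,
          norm_zero]
      rw [hz, zero_add]
      have hle : ∀ k : ℕ, a (k + d) ≤ ((4*|r|)^d / d.factorial) * ((4*|r|)^k / k.factorial) := by
        intro k
        calc a (k+d) ≤ (4*|r|) ^ (k+d) / (k+d).factorial := term_norm_le r x y (k+d)
        _ ≤ ((4*|r|)^d / d.factorial) * ((4*|r|)^k / k.factorial) := by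
            rw [pow_add, div_mul_div_comm, mul_comm ((4*|r|)^k)]
            gcongr
            exact_mod_cast Nat.le_of_dvd (by positivity)
                (Nat.add_comm k d ▸ Nat.factorial_mul_factorial_dvd_factorial_add d k)
      calc (∑' k : ℕ, a (k + d))
          ≤ ∑' k : ℕ, ((4*|r|)^d / d.factorial) * ((4*|r|)^k / k.factorial) := by
            apply Summable.tsum_le_tsum hle ((summable_nat_add_iff d).2 hsum)
            exact (summable_bound r).mul_left _
      _ = ((4*|r|)^d / d.factorial) * ∑' k : ℕ, ((4*|r|)^k / k.factorial) := tsum_mul_left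
      _ = ((4*|r|)^d / d.factorial) * Real.exp (4*|r|) := by
            congr 1
            rw [Real.exp_eq_exp_ℝ, NormedSpace.exp_eq_tsum_div]
      _ = Real.exp (4 * |r|) * (4 * |r|) ^ d / (d.factorial : ℝ) := by ring

/-- The symbol of the discrete Laplacian. -/
noncomputable def gg (θ : ℝ) : ℂ :=
  Complex.exp (Complex.I * θ) + Complex.exp (-(Complex.I * θ)) - 2

lemma gg_cont : Continuous gg := by
  unfold gg; fun_prop

lemma gg_real (θ : ℝ) : gg θ = ((2 * Real.cos θ - 2 : ℝ) : ℂ) := by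
  unfold gg
  rw [show Complex.I * θ = (θ:ℂ) * Complex.I by ring, Complex.exp_mul_I,
    show -((θ:ℂ) * Complex.I) = ((-θ : ℝ):ℂ) * Complex.I by push_cast; ring,
    Complex.exp_mul_I]
  push_cast
  simp [Real.cos_neg, Real.sin_neg]
  ring

lemma gg_norm (θ : ℝ) : ‖gg θ‖ ≤ 4 := by
  rw [gg_real, Complex.norm_real]
  have := Real.neg_one_le_cos θ
  have := Real.cos_le_one θ
  rw [Real.norm_eq_abs, abs_le]
  constructor <;> nlinarith

lemma cont_integrand (n : ℕ) (c : ℂ) (k : ℤ) :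
    Continuous (fun θ : ℝ => c * gg θ ^ n * Complex.exp (Complex.I * k * θ)) := by
  have := gg_cont
  fun_prop

lemma int_exp_zero (k : ℤ) (hk : k ≠ 0) :
    ∫ θ : ℝ in (-π)..π, Complex.exp (Complex.I * k * θ) = 0 := by
  have hc : (Complex.I * k) ≠ 0 := by
    simp [Complex.ext_iff, hk]
  rw [integral_exp_mul_complex hc]
  have h1 : Complex.I * k * π = (k : ℂ) * (π * Complex.I) := by ring
  have h2 : Complex.I * k * ((-π : ℝ) : ℂ) = ((-k : ℤ) : ℂ) * (π * Complex.I) := by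
    push_cast; ring
  rw [h1, h2, Complex.exp_int_mul, Complex.exp_int_mul, Complex.exp_pi_mul_I]
  rw [zpow_neg]
  have : ((-1 : ℂ) ^ k)⁻¹ = (-1 : ℂ) ^ k := by
    rcases Int.even_or_odd k with he | ho
    · rw [he.neg_one_zpow]; simp
    · rw [ho.neg_one_zpow]; norm_num
  rw [this]
  simp

lemma lap_iter_integral (y : ℤ) (n : ℕ) (x : ℤ) :
    lap^[n] (fun z => if z = y then (1:ℂ) else 0) x
      = (2*(π:ℂ))⁻¹ * ∫ θ : ℝ in (-π)..π,
          gg θ ^ n * Complex.exp (Complex.I * (x - y : ℤ) * θ) := by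
  have hpi : (2*(π:ℂ)) ≠ 0 := by
    simp [Complex.ext_iff, Real.pi_ne_zero]
  induction n generalizing x with
  | zero =>
    simp only [Function.iterate_zero, id, pow_zero, one_mul]
    by_cases hxy : x = y
    · subst hxy
      simp only [sub_self, Int.cast_zero, mul_zero, zero_mul, Complex.exp_zero, if_pos rfl]
      rw [intervalIntegral.integral_const, Complex.real_smul, mul_one]
      push_cast
      rw [show ((π:ℂ) - -π) = 2 * π by ring, inv_mul_cancel₀ hpi]
    · rw [if_neg hxy, int_exp_zero _ (by omega), mul_zero]
  | succ n ih =>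
    have ii : ∀ (c : ℂ) (k : ℤ), IntervalIntegrable
        (fun θ : ℝ => c * gg θ ^ n * Complex.exp (Complex.I * k * θ))
          MeasureTheory.volume (-π) π :=
      fun c k => (cont_integrand n c k).intervalIntegrable _ _
    have ii1 : ∀ k : ℤ, IntervalIntegrable
        (fun θ : ℝ => gg θ ^ n * Complex.exp (Complex.I * k * θ))
          MeasureTheory.volume (-π) π := by
      intro k
      simpa using ii 1 k
    have hJ : (∫ θ : ℝ in (-π)..π, gg θ ^ n * Complex.exp (Complex.I * ((x+1-y : ℤ):ℂ) * θ))
        - (∫ θ : ℝ in (-π)..π, (2:ℂ) * gg θ ^ n * Complex.exp (Complex.I * ((x-y : ℤ):ℂ) * θ))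
        + (∫ θ : ℝ in (-π)..π, gg θ ^ n * Complex.exp (Complex.I * ((x-1-y : ℤ):ℂ) * θ))
        = ∫ θ : ℝ in (-π)..π, gg θ ^ (n+1) * Complex.exp (Complex.I * ((x-y : ℤ):ℂ) * θ) := by
      rw [← integral_sub (ii1 _) (ii 2 _), ← integral_add (((ii1 _).sub (ii 2 _))) (ii1 _)]
      apply intervalIntegral.integral_congr
      intro θ _
      simp only
      have e1 : Complex.I * ((x + 1 - y : ℤ) : ℂ) * θ
          = Complex.I * θ + Complex.I * ((x - y : ℤ) : ℂ) * θ := by push_cast; ring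
      have e2 : Complex.I * ((x - 1 - y : ℤ) : ℂ) * θ
          = -(Complex.I * θ) + Complex.I * ((x - y : ℤ) : ℂ) * θ := by push_cast; ring
      rw [e1, e2, Complex.exp_add, Complex.exp_add, pow_succ]
      unfold gg
      ring
    rw [Function.iterate_succ_apply', lap_apply, ih (x+1), ih x, ih (x-1)]
    have h2 : (∫ θ : ℝ in (-π)..π, (2:ℂ) * gg θ ^ n * Complex.exp (Complex.I * ((x-y : ℤ):ℂ) * θ))
        = 2 * ∫ θ : ℝ in (-π)..π, gg θ ^ n * Complex.exp (Complex.I * ((x-y : ℤ):ℂ) * θ) := by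
      rw [← intervalIntegral.integral_const_mul]
      apply intervalIntegral.integral_congr
      intro θ _; ring
    rw [h2] at hJ
    linear_combination (2*(π:ℂ))⁻¹ * hJ

lemma norm_exp_I_mul_int (k : ℤ) (θ : ℝ) : ‖Complex.exp (Complex.I * k * θ)‖ = 1 := by
  rw [show Complex.I * k * θ = ((k * θ : ℝ) : ℂ) * Complex.I by push_cast; ring]
  rw [Complex.norm_exp_ofReal_mul_I]

lemma norm_exp_I_mul_gg (r : ℝ) (θ : ℝ) : ‖Complex.exp (Complex.I * r * gg θ)‖ = 1 := by
  rw [gg_real, show Complex.I * r * ((2 * Real.cos θ - 2 : ℝ) : ℂ)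
    = ((r * (2 * Real.cos θ - 2) : ℝ) : ℂ) * Complex.I by push_cast; ring]
  rw [Complex.norm_exp_ofReal_mul_I]

theorem Tr_integral (r : ℝ) (x y : ℤ) :
    Tr r (fun z => if z = y then (1:ℂ) else 0) x
      = (2*(π:ℂ))⁻¹ * ∫ θ : ℝ in (-π)..π,
          Complex.exp (Complex.I * r * gg θ) * Complex.exp (Complex.I * ((x-y:ℤ):ℂ) * θ) := by
  have hpile : (-π : ℝ) ≤ π := by linarith [Real.pi_pos]
  set F : ℕ → ℝ → ℂ := fun n θ =>
    ((Complex.I * (r : ℂ)) ^ n / (n.factorial : ℂ)) *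
      (gg θ ^ n * Complex.exp (Complex.I * ((x-y:ℤ):ℂ) * θ)) with hF
  have hFcont : ∀ n, Continuous (F n) := by
    intro n
    have := gg_cont
    fun_prop
  have hFnorm : ∀ n θ, ‖F n θ‖ ≤ (4*|r|)^n / n.factorial := by
    intro n θ
    rw [hF]
    simp only
    rw [norm_mul, norm_mul, norm_div, norm_pow, norm_mul, Complex.norm_I, one_mul,
      Complex.norm_real, Real.norm_eq_abs, Complex.norm_natCast, norm_pow,
      norm_exp_I_mul_int, mul_one]
    rw [mul_pow, div_mul_eq_mul_div, mul_comm (|r|^n)]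
    gcongr
    · exact gg_norm θ
  have step1 : Tr r (fun z => if z = y then (1:ℂ) else 0) x
      = (2*(π:ℂ))⁻¹ * ∑' n : ℕ, ∫ θ : ℝ in Set.Ioc (-π) π, F n θ := by
    unfold Tr
    rw [← tsum_mul_left]
    apply tsum_congr
    intro n
    rw [lap_iter_integral y n x, intervalIntegral.integral_of_le hpile]
    simp only [hF]
    rw [MeasureTheory.integral_const_mul]
    ring
  have hμ : (volume.restrict (Set.Ioc (-π) π)) Set.univ = ENNReal.ofReal (2*π) := by
    rw [Measure.restrict_apply_univ, Real.volume_Ioc]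
    congr 1
    ring
  have hint : ∀ n, Integrable (F n) (volume.restrict (Set.Ioc (-π) π)) := fun n =>
    (hFcont n).integrableOn_Ioc
  have hs : Summable (fun n => ∫ θ in Set.Ioc (-π) π, ‖F n θ‖) := by
    apply Summable.of_nonneg_of_le (fun n => integral_nonneg fun θ => norm_nonneg _)
      (fun n => ?_) ((Real.summable_pow_div_factorial (4*|r|)).mul_left (2*π))
    calc ∫ θ in Set.Ioc (-π) π, ‖F n θ‖
        ≤ ∫ _ in Set.Ioc (-π) π, (4*|r|)^n/(n.factorial : ℝ) :=
          integral_mono (hint n).norm (integrable_const _) (fun θ => hFnorm n θ)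
      _ = (2*π) * ((4*|r|)^n/(n.factorial : ℝ)) := by
          rw [MeasureTheory.integral_const, measureReal_def, hμ, smul_eq_mul,
            ENNReal.toReal_ofReal (by positivity)]
  have hpt : ∀ θ : ℝ, ∑' n : ℕ, F n θ
      = Complex.exp (Complex.I * r * gg θ) * Complex.exp (Complex.I * ((x-y:ℤ):ℂ) * θ) := by
    intro θ
    calc ∑' n : ℕ, F n θ
        = (∑' n : ℕ, (Complex.I * r * gg θ)^n / (n.factorial : ℂ)) *
            Complex.exp (Complex.I * ((x-y:ℤ):ℂ) * θ) := by
          rw [← tsum_mul_right]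
          apply tsum_congr
          intro n
          simp only [hF]
          rw [mul_pow]
          ring
      _ = Complex.exp (Complex.I * r * gg θ) * Complex.exp (Complex.I * ((x-y:ℤ):ℂ) * θ) := by
          rw [Complex.exp_eq_exp_ℂ, NormedSpace.exp_eq_tsum_div]
  rw [step1, integral_tsum_of_summable_integral_norm hint hs,
    intervalIntegral.integral_of_le hpile]
  congr 1
  exact integral_congr_ae (Filter.Eventually.of_forall fun θ => hpt θ)

theorem norm_Tr_le_one (r : ℝ) (x y : ℤ) :
    ‖Tr r (fun z => if z = y then (1:ℂ) else 0) x‖ ≤ 1 := by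
  rw [Tr_integral r x y]
  have hpi : (0:ℝ) < π := Real.pi_pos
  rw [norm_mul]
  have h1 : ‖(2*(π:ℂ))⁻¹‖ = (2*π)⁻¹ := by
    rw [norm_inv]
    congr 1
    rw [show (2*(π:ℂ)) = ((2*π : ℝ) : ℂ) by push_cast; ring, Complex.norm_real,
      Real.norm_eq_abs, abs_of_pos (by positivity)]
  rw [h1]
  have h2 : ‖∫ θ : ℝ in (-π)..π,
      Complex.exp (Complex.I * r * gg θ) * Complex.exp (Complex.I * ((x-y:ℤ):ℂ) * θ)‖
      ≤ 1 * |π - (-π)| := by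
    apply intervalIntegral.norm_integral_le_of_norm_le_const
    intro θ _
    rw [norm_mul, norm_exp_I_mul_gg, norm_exp_I_mul_int]
    norm_num
  have h3 : |π - (-π)| = 2*π := by
    rw [abs_of_pos (by linarith)]
    ring
  calc (2*π)⁻¹ * ‖_‖ ≤ (2*π)⁻¹ * (1 * (2*π)) := by
        rw [← h3]
        gcongr
      _ = 1 := by field_simp

/-- Kernel bound `|⟨x|T_r|y⟩| ≤ min(1, e^{4|r|}(4|r|)^{|x-y|}/|x-y|!)`. -/
theorem stmt_5 (r : ℝ) (x y : ℤ) :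
    ‖Tr r (fun z => if z = y then (1 : ℂ) else 0) x‖ ≤
      min 1 (Real.exp (4 * |r|) * (4 * |r|) ^ (x - y).natAbs /
        ((x - y).natAbs.factorial : ℝ)) := by
  exact le_min (norm_Tr_le_one r x y) (norm_Tr_le_exp r x y)
end

section
/- For any f ∈ ℓ^2(ℤ) one has ‖f‖_∞^2 ≤ ‖f‖_2 · ‖D_+ f‖_2, where (D_+ f)(x) = f(x+1) − f(x). -/
lemma summable_nn_le {f g : ℤ → ℝ} (h0 : ∀ y, 0 ≤ f y) (hle : ∀ y, f y ≤ g y)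
    (hg : Summable g) : Summable f :=
  Summable.of_norm_bounded hg fun y => by
    rw [Real.norm_eq_abs, abs_of_nonneg (h0 y)]; exact hle y

/-- Cauchy–Schwarz for tsum over ℤ, nonneg sequences. -/
lemma cs_tsum (a b : ℤ → ℝ) (ha0 : ∀ y, 0 ≤ a y) (hb0 : ∀ y, 0 ≤ b y)
    (ha : Summable fun y => a y ^ 2) (hb : Summable fun y => b y ^ 2) :
    ∑' y, a y * b y ≤ Real.sqrt (∑' y, a y ^ 2) * Real.sqrt (∑' y, b y ^ 2) := by
  have hab : Summable fun y => a y * b y := by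
    apply summable_nn_le (fun y => mul_nonneg (ha0 y) (hb0 y))
      (g := fun y => (a y ^ 2 + b y ^ 2) / 2)
    · intro y; nlinarith [sq_nonneg (a y - b y)]
    · exact ((ha.add hb).div_const 2)
  refine Summable.tsum_le_of_sum_le hab fun s => ?_
  refine (Real.sum_mul_le_sqrt_mul_sqrt s a b).trans ?_
  have h1 := Summable.sum_le_tsum s (fun y _ => sq_nonneg (a y)) ha
  have h2 := Summable.sum_le_tsum s (fun y _ => sq_nonneg (b y)) hb
  exact mul_le_mul (Real.sqrt_le_sqrt h1) (Real.sqrt_le_sqrt h2)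
    (Real.sqrt_nonneg _) (Real.sqrt_nonneg _)

/-- Telescoping bound. -/
lemma telescope_abs (g : ℤ → ℝ) (m : ℤ) (n : ℕ) :
    |g (m + n) - g m| ≤ ∑ i ∈ Finset.range n, |g (m + i + 1) - g (m + i)| := by
  induction n with
  | zero => simp
  | succ n ih =>
    rw [Finset.sum_range_succ]
    have : g (m + (n + 1 : ℕ)) - g m =
        (g (m + n + 1) - g (m + n)) + (g (m + (n : ℕ)) - g m) := by
      push_cast; ring_nf
    rw [this]
    calc |(g (m + n + 1) - g (m + n)) + (g (m + (n : ℕ)) - g m)|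
        ≤ |g (m + n + 1) - g (m + n)| + |g (m + (n : ℕ)) - g m| := abs_add_le _ _
      _ ≤ _ := by
          rw [add_comm]
          gcongr

theorem stmt_6 (f : ℤ → ℂ) (hf : Summable fun x => ‖f x‖ ^ 2) :
    (⨆ x : ℤ, ‖f x‖) ^ 2 ≤
      Real.sqrt (∑' x : ℤ, ‖f x‖ ^ 2) * Real.sqrt (∑' x : ℤ, ‖f (x + 1) - f x‖ ^ 2) := by
  set g : ℤ → ℝ := fun y => ‖f y‖ ^ 2 with hg_def
  set d : ℤ → ℝ := fun y => ‖f (y + 1) - f y‖ with hd_def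
  set D : ℤ → ℝ := fun y => |g (y + 1) - g y| with hD_def
  have hg0 : ∀ y, 0 ≤ g y := fun y => sq_nonneg _
  have hgs : Summable fun y => g (y + 1) :=
    ((Equiv.addRight (1 : ℤ)).summable_iff (f := g)).mpr hf
  have hD : Summable D := by
    apply summable_nn_le (fun y => abs_nonneg _)
      (g := fun y => g (y + 1) + g y)
    · intro y
      calc |g (y + 1) - g y| ≤ |g (y + 1)| + |g y| := abs_sub _ _
        _ = g (y + 1) + g y := by rw [abs_of_nonneg (hg0 _), abs_of_nonneg (hg0 _)]
    · exact hgs.add hf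
  have hd2 : Summable fun y => d y ^ 2 := by
    apply summable_nn_le (fun y => sq_nonneg _)
      (g := fun y => 2 * g (y + 1) + 2 * g y)
    · intro y
      have h1 : ‖f (y + 1) - f y‖ ≤ ‖f (y + 1)‖ + ‖f y‖ := norm_sub_le _ _
      have h2 : (0 : ℝ) ≤ ‖f (y + 1) - f y‖ := norm_nonneg _
      simp only [hd_def, hg_def]
      nlinarith [sq_nonneg (‖f (y + 1)‖ - ‖f y‖), norm_nonneg (f (y + 1)), norm_nonneg (f y)]
    · exact ((hgs.mul_left 2).add (hf.mul_left 2))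
  -- tendsto zero at cofinite
  have hten : Filter.Tendsto g Filter.cofinite (nhds 0) := hf.tendsto_cofinite_zero
  -- key bound on indicator sums
  have key_half : ∀ (x : ℤ) (s : Set ℤ), (∀ m : ℤ, ∀ n : ℕ, m + n = x → ∀ i ∈ Finset.range n, m + i ∈ s) →
      (∀ ε > 0, ∃ m : ℤ, ∃ n : ℕ, m + n = x ∧ g m < ε) →
      g x ≤ ∑' y, s.indicator D y := by
    intro x s hmem hex
    have hI : Summable (s.indicator D) := hD.indicator s
    refine le_of_forall_pos_le_add fun ε hε => ?_
    obtain ⟨m, n, hmn, hgm⟩ := hex ε hε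
    have tb := telescope_abs g m n
    rw [hmn] at tb
    have h1 : g x ≤ g m + ∑ i ∈ Finset.range n, |g (m + i + 1) - g (m + i)| := by
      have : g x - g m ≤ |g x - g m| := le_abs_self _
      linarith
    have h2 : ∑ i ∈ Finset.range n, |g (m + i + 1) - g (m + i)| ≤ ∑' y, s.indicator D y := by
      have heq : ∑ i ∈ Finset.range n, |g (m + i + 1) - g (m + i)|
          = ∑ i ∈ Finset.range n, s.indicator D (m + i) := by
        refine Finset.sum_congr rfl fun i hi => ?_
        rw [Set.indicator_of_mem (hmem m n hmn i hi)]
      rw [heq]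
      have hemb : Function.Injective (fun i : ℕ => m + (i : ℤ)) := by
        intro i j h; simpa using h
      calc ∑ i ∈ Finset.range n, s.indicator D (m + i)
          = ∑ y ∈ (Finset.range n).map ⟨fun i : ℕ => m + (i : ℤ), hemb⟩, s.indicator D y :=
            (Finset.sum_map (Finset.range n) ⟨fun i : ℕ => m + (i : ℤ), hemb⟩
              (s.indicator D)).symm
        _ ≤ ∑' y, s.indicator D y :=
            Summable.sum_le_tsum _ (fun y _ => Set.indicator_nonneg (fun z _ => abs_nonneg _) y) hI
    linarith
  have hsmall : ∀ ε > 0, {y : ℤ | ¬ g y < ε}.Finite := by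
    intro ε hε
    have h : (g ⁻¹' Set.Iio ε)ᶜ.Finite := Filter.mem_cofinite.mp (hten (Iio_mem_nhds hε))
    exact h
  have low : ∀ x : ℤ, g x ≤ ∑' y, (Set.Iio x).indicator D y := by
    intro x
    refine key_half x (Set.Iio x) ?_ ?_
    · intro m n hmn i hi
      have : (i : ℤ) < n := by exact_mod_cast Finset.mem_range.mp hi
      simp only [Set.mem_Iio]; omega
    · intro ε hε
      have hfin := hsmall ε hε
      have hinf : (Set.Iio x \ {y : ℤ | ¬ g y < ε}).Infinite :=
        (Set.Iio_infinite x).diff hfin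
      obtain ⟨m, hm⟩ := hinf.nonempty
      refine ⟨m, (x - m).toNat, ?_, ?_⟩
      · have : m < x := hm.1
        omega
      · have := hm.2; simpa using not_not.mp this
  have high : ∀ x : ℤ, g x ≤ ∑' y, (Set.Ici x).indicator D y := by
    intro x
    refine le_of_forall_pos_le_add fun ε hε => ?_
    have hI : Summable ((Set.Ici x).indicator D) := hD.indicator _
    have hfin := hsmall ε hε
    have hinf : (Set.Ioi x \ {y : ℤ | ¬ g y < ε}).Infinite :=
      (Set.Ioi_infinite x).diff hfin
    obtain ⟨M, hM⟩ := hinf.nonempty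
    have hxM : x < M := hM.1
    have hgM : g M < ε := not_not.mp hM.2
    set n : ℕ := (M - x).toNat with hn
    have hMn : x + (n : ℤ) = M := by omega
    have tb := telescope_abs g x n
    rw [hMn] at tb
    have h1 : g x ≤ g M + ∑ i ∈ Finset.range n, |g (x + i + 1) - g (x + i)| := by
      have : g M - g x ≤ |g M - g x| := le_abs_self _
      have habs : |g M - g x| = |g x - g M| := abs_sub_comm _ _
      have := hg0 M
      nlinarith [le_abs_self (g x - g M), abs_sub_comm (g M) (g x), tb,
        neg_abs_le (g x - g M)]
    have h2 : ∑ i ∈ Finset.range n, |g (x + i + 1) - g (x + i)| ≤ ∑' y, (Set.Ici x).indicator D y := by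
      have heq : ∑ i ∈ Finset.range n, |g (x + i + 1) - g (x + i)|
          = ∑ i ∈ Finset.range n, (Set.Ici x).indicator D (x + i) := by
        refine Finset.sum_congr rfl fun i hi => ?_
        rw [Set.indicator_of_mem (by simp only [Set.mem_Ici]; omega)]
      rw [heq]
      have hemb : Function.Injective (fun i : ℕ => x + (i : ℤ)) := by
        intro i j h; simpa using h
      calc ∑ i ∈ Finset.range n, (Set.Ici x).indicator D (x + i)
          = ∑ y ∈ (Finset.range n).map ⟨fun i : ℕ => x + (i : ℤ), hemb⟩,
              (Set.Ici x).indicator D y :=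
            (Finset.sum_map (Finset.range n) ⟨fun i : ℕ => x + (i : ℤ), hemb⟩
              ((Set.Ici x).indicator D)).symm
        _ ≤ ∑' y, (Set.Ici x).indicator D y :=
            Summable.sum_le_tsum _ (fun y _ => Set.indicator_nonneg (fun z _ => abs_nonneg _) y) hI
    linarith
  -- combine halves: 2 g x ≤ tsum D
  have two_bound : ∀ x : ℤ, 2 * g x ≤ ∑' y, D y := by
    intro x
    have hsplit : ∑' y, (Set.Iio x).indicator D y + ∑' y, (Set.Iio x)ᶜ.indicator D y
        = ∑' y, D y := by
      rw [← Summable.tsum_add (hD.indicator _) (hD.indicator _)]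
      congr 1
      ext y
      by_cases h : y < x
      · simp [Set.indicator_apply, Set.mem_Iio, Set.mem_compl_iff, h, not_le.mpr h]
      · simp [Set.indicator_apply, Set.mem_Iio, Set.mem_compl_iff, h, not_lt.mp h]
    have hcompl : (Set.Iio x)ᶜ = Set.Ici x := Set.compl_Iio
    have h1 := low x
    have h2 := high x
    rw [hcompl] at hsplit
    linarith
  -- pointwise bound: D y ≤ d y * (‖f y‖ + ‖f (y+1)‖)
  have hdf : Summable fun y => d y * ‖f y‖ + d y * ‖f (y + 1)‖ := by
    have c1 : Summable fun y => d y * ‖f y‖ := by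
      apply summable_nn_le
        (fun y => mul_nonneg (norm_nonneg _) (norm_nonneg _))
        (g := fun y => (d y ^ 2 + g y) / 2)
      · intro y; simp only [hg_def]; nlinarith [sq_nonneg (d y - ‖f y‖)]
      · exact (hd2.add hf).div_const 2
    have c2 : Summable fun y => d y * ‖f (y + 1)‖ := by
      apply summable_nn_le
        (fun y => mul_nonneg (norm_nonneg _) (norm_nonneg _))
        (g := fun y => (d y ^ 2 + g (y + 1)) / 2)
      · intro y; simp only [hg_def]; nlinarith [sq_nonneg (d y - ‖f (y + 1)‖)]
      · exact (hd2.add hgs).div_const 2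
    exact c1.add c2
  have hDle : ∑' y, D y ≤ ∑' y, (d y * ‖f y‖ + d y * ‖f (y + 1)‖) := by
    refine Summable.tsum_le_tsum (fun y => ?_) hD hdf
    have h1 : |g (y + 1) - g y| = |‖f (y + 1)‖ - ‖f y‖| * (‖f (y + 1)‖ + ‖f y‖) := by
      simp only [hg_def]
      have hs : (0 : ℝ) ≤ ‖f (y + 1)‖ + ‖f y‖ := by positivity
      rw [show ‖f (y + 1)‖ ^ 2 - ‖f y‖ ^ 2
          = (‖f (y + 1)‖ - ‖f y‖) * (‖f (y + 1)‖ + ‖f y‖) by ring, abs_mul,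
        abs_of_nonneg hs]
    have h2 : |‖f (y + 1)‖ - ‖f y‖| ≤ d y := abs_norm_sub_norm_le _ _
    calc D y = |‖f (y + 1)‖ - ‖f y‖| * (‖f (y + 1)‖ + ‖f y‖) := h1
      _ ≤ d y * (‖f (y + 1)‖ + ‖f y‖) :=
          mul_le_mul_of_nonneg_right h2 (by positivity)
      _ = d y * ‖f y‖ + d y * ‖f (y + 1)‖ := by ring
  -- Cauchy-Schwarz
  set S1 : ℝ := ∑' x : ℤ, ‖f x‖ ^ 2 with hS1
  set S2 : ℝ := ∑' x : ℤ, ‖f (x + 1) - f x‖ ^ 2 with hS2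
  have hshift : (∑' y : ℤ, ‖f (y + 1)‖ ^ 2) = S1 := by
    rw [hS1]
    exact (Equiv.addRight (1 : ℤ)).tsum_eq (fun y => ‖f y‖ ^ 2)
  have cs1 : ∑' y, d y * ‖f y‖ ≤ Real.sqrt S2 * Real.sqrt S1 :=
    cs_tsum d (fun y => ‖f y‖) (fun y => norm_nonneg _) (fun y => norm_nonneg _) hd2 hf
  have cs2 : ∑' y, d y * ‖f (y + 1)‖ ≤ Real.sqrt S2 * Real.sqrt S1 := by
    have h := cs_tsum d (fun y => ‖f (y + 1)‖) (fun y => norm_nonneg _)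
      (fun y => norm_nonneg _) hd2 hgs
    rwa [hshift] at h
  have key : ∀ x : ℤ, g x ≤ Real.sqrt S1 * Real.sqrt S2 := by
    intro x
    have c1 : Summable fun y => d y * ‖f y‖ := by
      apply summable_nn_le
        (fun y => mul_nonneg (norm_nonneg _) (norm_nonneg _))
        (g := fun y => (d y ^ 2 + g y) / 2)
      · intro y; simp only [hg_def]; nlinarith [sq_nonneg (d y - ‖f y‖)]
      · exact (hd2.add hf).div_const 2
    have c2 : Summable fun y => d y * ‖f (y + 1)‖ := by
      apply summable_nn_le
        (fun y => mul_nonneg (norm_nonneg _) (norm_nonneg _))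
        (g := fun y => (d y ^ 2 + g (y + 1)) / 2)
      · intro y; simp only [hg_def]; nlinarith [sq_nonneg (d y - ‖f (y + 1)‖)]
      · exact (hd2.add hgs).div_const 2
    have hsum : ∑' y, (d y * ‖f y‖ + d y * ‖f (y + 1)‖)
        = ∑' y, d y * ‖f y‖ + ∑' y, d y * ‖f (y + 1)‖ := Summable.tsum_add c1 c2
    have := two_bound x
    have h := hDle
    rw [hsum] at h
    nlinarith [cs1, cs2]
  -- final step
  have hR : 0 ≤ Real.sqrt S1 * Real.sqrt S2 := by positivity
  have hsup : (⨆ x : ℤ, ‖f x‖) ≤ Real.sqrt (Real.sqrt S1 * Real.sqrt S2) := by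
    refine ciSup_le fun x => ?_
    exact Real.le_sqrt_of_sq_le (key x)
  have hsup0 : 0 ≤ ⨆ x : ℤ, ‖f x‖ :=
    Real.iSup_nonneg fun x => norm_nonneg _
  calc (⨆ x : ℤ, ‖f x‖) ^ 2 ≤ Real.sqrt (Real.sqrt S1 * Real.sqrt S2) ^ 2 := by
        gcongr
    _ = Real.sqrt S1 * Real.sqrt S2 := Real.sq_sqrt hR
end

section
/- For any f ∈ ℓ^2(ℤ) and any real γ ≥ 6, one has ‖f‖_γ^γ ≤ ‖f‖_2^{γ−2} ‖D_+ f‖_2^2. -/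
open Filter Real Finset

lemma aux_summable_mul {u v : ℤ → ℝ} (hu0 : ∀ x, 0 ≤ u x) (hv0 : ∀ x, 0 ≤ v x)
    (hu : Summable fun x => u x ^ 2) (hv : Summable fun x => v x ^ 2) :
    Summable fun x => u x * v x := by
  refine Summable.of_nonneg_of_le (fun x => mul_nonneg (hu0 x) (hv0 x))
    (fun x => ?_) ((hu.add hv).mul_left (1/2 : ℝ))
  have := sq_nonneg (u x - v x)
  nlinarith

lemma aux_tsum_cs {u v : ℤ → ℝ} (hu0 : ∀ x, 0 ≤ u x) (hv0 : ∀ x, 0 ≤ v x)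
    (hu : Summable fun x => u x ^ 2) (hv : Summable fun x => v x ^ 2) :
    ∑' x, u x * v x ≤ Real.sqrt (∑' x, u x ^ 2) * Real.sqrt (∑' x, v x ^ 2) := by
  refine Summable.tsum_le_of_sum_le (aux_summable_mul hu0 hv0 hu hv) fun s => ?_
  refine (Real.sum_mul_le_sqrt_mul_sqrt s u v).trans ?_
  gcongr <;> exact Summable.sum_le_tsum s (fun i _ => sq_nonneg _) ‹_›

lemma aux_key (f : ℤ → ℂ) (hf : Summable fun x => ‖f x‖ ^ 2) (x : ℤ) :
    ‖f x‖ ^ 2 ≤ Real.sqrt ((∑' y : ℤ, ‖f y‖ ^ 2) * ∑' y : ℤ, ‖f (y + 1) - f y‖ ^ 2) := by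
  set S : ℝ := ∑' y : ℤ, ‖f y‖ ^ 2 with hS
  set D : ℝ := ∑' y : ℤ, ‖f (y + 1) - f y‖ ^ 2 with hD
  have hshift : Summable fun y : ℤ => ‖f (y + 1)‖ ^ 2 :=
    hf.comp_injective (add_left_injective (1 : ℤ))
  have hΔ : Summable fun y : ℤ => ‖f (y + 1) - f y‖ ^ 2 := by
    refine Summable.of_nonneg_of_le (fun y => sq_nonneg _) (fun y => ?_)
      ((hshift.mul_left 2).add (hf.mul_left 2))
    have h1 : ‖f (y + 1) - f y‖ ≤ ‖f (y + 1)‖ + ‖f y‖ := norm_sub_le _ _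
    have h2 : (0:ℝ) ≤ ‖f (y + 1) - f y‖ := norm_nonneg _
    nlinarith [sq_nonneg (‖f (y+1)‖ - ‖f y‖), norm_nonneg (f (y+1)), norm_nonneg (f y)]
  -- g y = |‖f (y+1)‖² - ‖f y‖²|
  set g : ℤ → ℝ := fun y => |‖f (y + 1)‖ ^ 2 - ‖f y‖ ^ 2| with hg
  have hgle : ∀ y, g y ≤ ‖f (y + 1)‖ * ‖f (y + 1) - f y‖ + ‖f y‖ * ‖f (y + 1) - f y‖ := by
    intro y
    have h1 : |‖f (y + 1)‖ - ‖f y‖| ≤ ‖f (y + 1) - f y‖ := abs_norm_sub_norm_le _ _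
    have h2 : g y = |‖f (y + 1)‖ - ‖f y‖| * (‖f (y + 1)‖ + ‖f y‖) := by
      rw [hg]
      rw [← abs_of_nonneg (by positivity : (0:ℝ) ≤ ‖f (y + 1)‖ + ‖f y‖), ← abs_mul]
      ring_nf
    rw [h2]
    have h3 : |‖f (y + 1)‖ - ‖f y‖| * (‖f (y + 1)‖ + ‖f y‖)
        ≤ ‖f (y + 1) - f y‖ * (‖f (y + 1)‖ + ‖f y‖) := by
      apply mul_le_mul_of_nonneg_right h1 (by positivity)
    linarith [h3]
  have hsum1 : Summable fun y : ℤ => ‖f (y + 1)‖ * ‖f (y + 1) - f y‖ :=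
    aux_summable_mul (fun _ => norm_nonneg _) (fun _ => norm_nonneg _) hshift hΔ
  have hsum2 : Summable fun y : ℤ => ‖f y‖ * ‖f (y + 1) - f y‖ :=
    aux_summable_mul (fun _ => norm_nonneg _) (fun _ => norm_nonneg _) hf hΔ
  have hgsum : Summable g :=
    Summable.of_nonneg_of_le (fun y => abs_nonneg _) hgle (hsum1.add hsum2)
  set T : ℝ := ∑' y, g y with hT
  have hS0 : 0 ≤ S := tsum_nonneg fun _ => sq_nonneg _
  have hD0 : 0 ≤ D := tsum_nonneg fun _ => sq_nonneg _
  -- T ≤ 2 √S √D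
  have hTle : T ≤ 2 * (Real.sqrt S * Real.sqrt D) := by
    have step1 : T ≤ ∑' y, (‖f (y + 1)‖ * ‖f (y + 1) - f y‖ + ‖f y‖ * ‖f (y + 1) - f y‖) :=
      Summable.tsum_le_tsum hgle hgsum (hsum1.add hsum2)
    have step2 : (∑' y, (‖f (y + 1)‖ * ‖f (y + 1) - f y‖ + ‖f y‖ * ‖f (y + 1) - f y‖))
        = (∑' y, ‖f (y + 1)‖ * ‖f (y + 1) - f y‖) + ∑' y, ‖f y‖ * ‖f (y + 1) - f y‖ :=
      Summable.tsum_add hsum1 hsum2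
    have hshiftsum : (∑' y : ℤ, ‖f (y + 1)‖ ^ 2) = S := by
      rw [hS]
      exact (Equiv.addRight (1 : ℤ)).tsum_eq fun y => ‖f y‖ ^ 2
    have cs1 : (∑' y, ‖f (y + 1)‖ * ‖f (y + 1) - f y‖) ≤ Real.sqrt S * Real.sqrt D := by
      have := aux_tsum_cs (fun y : ℤ => norm_nonneg (f (y+1))) (fun y => norm_nonneg _) hshift hΔ
      rwa [hshiftsum] at this
    have cs2 : (∑' y, ‖f y‖ * ‖f (y + 1) - f y‖) ≤ Real.sqrt S * Real.sqrt D :=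
      aux_tsum_cs (fun y => norm_nonneg _) (fun y => norm_nonneg _) hf hΔ
    linarith
  -- telescoping bound: ∀ n, 2‖f x‖² - ‖f (x-n)‖² - ‖f (x+n)‖² ≤ T
  have htel : ∀ n : ℕ, 2 * ‖f x‖ ^ 2 - ‖f (x - n)‖ ^ 2 - ‖f (x + n)‖ ^ 2 ≤ T := by
    intro n
    set e1 : ℕ ↪ ℤ := ⟨fun i => x - n + i, id fun a b hab => by simpa using hab⟩
    set e2 : ℕ ↪ ℤ := ⟨fun i => x + i, id fun a b hab => by simpa using hab⟩
    have hdisj : Disjoint ((range n).map e1) ((range n).map e2) := by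
      simp only [Finset.disjoint_left, Finset.mem_map, Finset.mem_range, e1, e2,
        Function.Embedding.coeFn_mk]
      rintro y ⟨a, ha, rfl⟩ ⟨b, hb, heq⟩
      omega
    have t1 : ‖f x‖ ^ 2 - ‖f (x - n)‖ ^ 2 ≤ ∑ y ∈ (range n).map e1, g y := by
      rw [Finset.sum_map]
      have tele : (∑ i ∈ range n, (‖f (x - n + (i + 1 : ℕ))‖ ^ 2 - ‖f (x - n + i)‖ ^ 2))
          = ‖f (x - n + (n : ℤ))‖ ^ 2 - ‖f (x - n + (0 : ℕ))‖ ^ 2 := by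
        exact Finset.sum_range_sub (fun i : ℕ => ‖f (x - n + i)‖ ^ 2) n
      have hxe : x - (n : ℤ) + (n : ℤ) = x := by ring
      rw [hxe] at tele
      calc ‖f x‖ ^ 2 - ‖f (x - n)‖ ^ 2
          = ∑ i ∈ range n, (‖f (x - n + (i + 1 : ℕ))‖ ^ 2 - ‖f (x - n + i)‖ ^ 2) := by
            rw [tele]; norm_num
        _ ≤ ∑ i ∈ range n, g (e1 i) := by
            apply Finset.sum_le_sum
            intro i _
            have : ((i : ℤ) + 1) = ((i + 1 : ℕ) : ℤ) := by push_cast; ring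
            calc ‖f (x - n + (i + 1 : ℕ))‖ ^ 2 - ‖f (x - n + i)‖ ^ 2
                ≤ |‖f (x - n + (i + 1 : ℕ))‖ ^ 2 - ‖f (x - n + i)‖ ^ 2| := le_abs_self _
              _ = g (e1 i) := by
                  simp only [hg, e1, Function.Embedding.coeFn_mk]
                  congr 2
                  push_cast
                  ring
    have t2 : ‖f x‖ ^ 2 - ‖f (x + n)‖ ^ 2 ≤ ∑ y ∈ (range n).map e2, g y := by
      rw [Finset.sum_map]
      have tele : (∑ i ∈ range n, (‖f (x + i)‖ ^ 2 - ‖f (x + (i + 1 : ℕ))‖ ^ 2))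
          = ‖f (x + (0 : ℕ))‖ ^ 2 - ‖f (x + (n : ℤ))‖ ^ 2 :=
        Finset.sum_range_sub' (fun i : ℕ => ‖f (x + i)‖ ^ 2) n
      calc ‖f x‖ ^ 2 - ‖f (x + n)‖ ^ 2
          = ∑ i ∈ range n, (‖f (x + i)‖ ^ 2 - ‖f (x + (i + 1 : ℕ))‖ ^ 2) := by
            rw [tele]; norm_num
        _ ≤ ∑ i ∈ range n, g (e2 i) := by
            apply Finset.sum_le_sum
            intro i _
            calc ‖f (x + i)‖ ^ 2 - ‖f (x + (i + 1 : ℕ))‖ ^ 2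
                ≤ |‖f (x + (i + 1 : ℕ))‖ ^ 2 - ‖f (x + i)‖ ^ 2| := by
                  rw [abs_sub_comm]; exact le_abs_self _
              _ = g (e2 i) := by
                  simp only [hg, e2, Function.Embedding.coeFn_mk]
                  congr 2
                  push_cast
                  ring
    have t3 : ∑ y ∈ (range n).map e1, g y + ∑ y ∈ (range n).map e2, g y ≤ T := by
      rw [← Finset.sum_union hdisj]
      exact Summable.sum_le_tsum _ (fun y _ => abs_nonneg _) hgsum
    linarith
  -- take the limit
  have hl1 : Tendsto (fun n : ℕ => ‖f (x - n)‖ ^ 2) atTop (nhds 0) := by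
    have hmap : Tendsto (fun n : ℕ => (x - n : ℤ)) atTop cofinite := by
      rw [← Nat.cofinite_eq_atTop]
      exact Function.Injective.tendsto_cofinite (fun a b hab => by omega)
    exact hf.tendsto_cofinite_zero.comp hmap
  have hl2 : Tendsto (fun n : ℕ => ‖f (x + n)‖ ^ 2) atTop (nhds 0) := by
    have hmap : Tendsto (fun n : ℕ => (x + n : ℤ)) atTop cofinite := by
      rw [← Nat.cofinite_eq_atTop]
      exact Function.Injective.tendsto_cofinite (fun a b hab => by omega)
    exact hf.tendsto_cofinite_zero.comp hmap
  have hlim : Tendsto (fun n : ℕ => 2 * ‖f x‖ ^ 2 - ‖f (x - n)‖ ^ 2 - ‖f (x + n)‖ ^ 2)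
      atTop (nhds (2 * ‖f x‖ ^ 2 - 0 - 0)) :=
    (tendsto_const_nhds.sub hl1).sub hl2
  have h2T : 2 * ‖f x‖ ^ 2 ≤ T := by
    have := le_of_tendsto hlim (Filter.Eventually.of_forall htel)
    linarith
  have : ‖f x‖ ^ 2 ≤ Real.sqrt S * Real.sqrt D := by linarith
  rwa [← Real.sqrt_mul hS0] at this

theorem stmt_7 (f : ℤ → ℂ) (hf : Summable fun x => ‖f x‖ ^ 2) (γ : ℝ) (hγ : 6 ≤ γ) :
    ∑' x : ℤ, ‖f x‖ ^ γ ≤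
      (∑' x : ℤ, ‖f x‖ ^ 2) ^ ((γ - 2) / 2) * ∑' x : ℤ, ‖f (x + 1) - f x‖ ^ 2 := by
  set S : ℝ := ∑' y : ℤ, ‖f y‖ ^ 2 with hS
  set D : ℝ := ∑' y : ℤ, ‖f (y + 1) - f y‖ ^ 2 with hD
  have hS0 : 0 ≤ S := tsum_nonneg fun _ => sq_nonneg _
  have hD0 : 0 ≤ D := tsum_nonneg fun _ => sq_nonneg _
  by_cases hz : ∀ x, f x = 0
  · have hfun : (fun x : ℤ => ‖f x‖ ^ γ) = fun _ => (0 : ℝ) := by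
      funext x
      rw [hz x]
      simp [Real.zero_rpow (by linarith : γ ≠ 0)]
    rw [tsum_congr fun x => congrFun hfun x, tsum_zero]
    exact mul_nonneg (Real.rpow_nonneg hS0 _) hD0
  · push_neg at hz
    obtain ⟨x0, hx0⟩ := hz
    have hSpos : 0 < S := by
      have h1 : ‖f x0‖ ^ 2 ≤ S := Summable.le_tsum hf x0 fun _ _ => sq_nonneg _
      have h2 : 0 < ‖f x0‖ ^ 2 := pow_pos (norm_pos_iff.mpr hx0) 2
      linarith
    have hfour : ∀ x, ‖f x‖ ^ 4 ≤ S * D := by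
      intro x
      have h1 := aux_key f hf x
      have h2 : (‖f x‖ ^ 2) ^ 2 ≤ Real.sqrt (S * D) ^ 2 := by
        nlinarith [Real.sqrt_nonneg (S * D), sq_nonneg (‖f x‖)]
      rw [Real.sq_sqrt (mul_nonneg hS0 hD0)] at h2
      calc ‖f x‖ ^ 4 = (‖f x‖ ^ 2) ^ 2 := by ring
        _ ≤ S * D := h2
    have hpoint : ∀ x, ‖f x‖ ^ γ ≤ (S ^ ((γ - 6) / 2) * (S * D)) * ‖f x‖ ^ 2 := by
      intro x
      rcases eq_or_lt_of_le (norm_nonneg (f x)) with h0 | hpos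
      · rw [← h0, Real.zero_rpow (by linarith : γ ≠ 0)]
        have : (0:ℝ) ^ 2 = 0 := by norm_num
        rw [this, mul_zero]
      · have h2S : ‖f x‖ ^ 2 ≤ S := Summable.le_tsum hf x fun _ _ => sq_nonneg _
        have hle : ‖f x‖ ≤ Real.sqrt S := Real.le_sqrt_of_sq_le h2S
        have e1 : ‖f x‖ ^ γ = ‖f x‖ ^ (γ - 6) * ‖f x‖ ^ (6 : ℕ) := by
          rw [← Real.rpow_natCast _ 6, ← Real.rpow_add hpos]
          norm_num
        have b1 : ‖f x‖ ^ (γ - 6) ≤ S ^ ((γ - 6) / 2) := by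
          calc ‖f x‖ ^ (γ - 6) ≤ Real.sqrt S ^ (γ - 6) :=
                Real.rpow_le_rpow (norm_nonneg _) hle (by linarith)
            _ = S ^ ((γ - 6) / 2) := by
                rw [Real.sqrt_eq_rpow, ← Real.rpow_mul hS0]
                congr 1
                ring
        have b2 : ‖f x‖ ^ (6 : ℕ) = ‖f x‖ ^ 4 * ‖f x‖ ^ 2 := by ring
        calc ‖f x‖ ^ γ = ‖f x‖ ^ (γ - 6) * (‖f x‖ ^ 4 * ‖f x‖ ^ 2) := by rw [e1, b2]
          _ ≤ S ^ ((γ - 6) / 2) * ((S * D) * ‖f x‖ ^ 2) := by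
              exact mul_le_mul b1 (mul_le_mul_of_nonneg_right (hfour x) (sq_nonneg _))
                (mul_nonneg (by positivity) (sq_nonneg _)) (Real.rpow_nonneg hS0 _)
          _ = (S ^ ((γ - 6) / 2) * (S * D)) * ‖f x‖ ^ 2 := by ring
    have hsummγ : Summable fun x : ℤ => ‖f x‖ ^ γ :=
      Summable.of_nonneg_of_le (fun x => Real.rpow_nonneg (norm_nonneg _) _) hpoint
        (hf.mul_left _)
    have hfinal : (∑' x : ℤ, ‖f x‖ ^ γ) ≤ (S ^ ((γ - 6) / 2) * (S * D)) * S := by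
      calc (∑' x : ℤ, ‖f x‖ ^ γ)
          ≤ ∑' x : ℤ, (S ^ ((γ - 6) / 2) * (S * D)) * ‖f x‖ ^ 2 :=
            Summable.tsum_le_tsum hpoint hsummγ (hf.mul_left _)
        _ = (S ^ ((γ - 6) / 2) * (S * D)) * S := by rw [tsum_mul_left]
    have hexp : (S ^ ((γ - 6) / 2) * (S * D)) * S = S ^ ((γ - 2) / 2) * D := by
      have h2 : S * S = S ^ (2 : ℝ) := by
        rw [show (2:ℝ) = ((2:ℕ):ℝ) by norm_num, Real.rpow_natCast]
        ring
      calc (S ^ ((γ - 6) / 2) * (S * D)) * S = (S ^ ((γ - 6) / 2) * (S * S)) * D := by ring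
        _ = (S ^ ((γ - 6) / 2) * S ^ (2 : ℝ)) * D := by rw [h2]
        _ = S ^ ((γ - 6) / 2 + 2) * D := by rw [← Real.rpow_add hSpos]
        _ = S ^ ((γ - 2) / 2) * D := by
            congr 1
            ring
    rw [← hexp]
    exact hfinal
end

section
/- Discrete IMS lower bound: for f ∈ ℓ^2(ℤ) and finitely many bounded real functions ξ₁,…,ξ_n on ℤ with ∑_j ξ_j² = 1, one has ⟨f, −Δf⟩ ≥ ∑_j ⟨ξ_j f, −Δ(ξ_j f)⟩ − (1/2) ∑_j ⟨f, (|D_+ξ_j|² + |D_−ξ_j|²) f⟩. -/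
private lemma nss (u v : ℂ) : ‖u - v‖^2 = ‖u‖^2 + ‖v‖^2 - 2*((starRingEnd ℂ) u * v).re := by
  simp only [Complex.sq_norm, Complex.normSq_apply, Complex.sub_re,
    Complex.sub_im, Complex.mul_re, Complex.conj_re, Complex.conj_im]
  ring

private lemma re_swap (u v : ℂ) : ((starRingEnd ℂ) u * v).re = ((starRingEnd ℂ) v * u).re := by
  simp [Complex.mul_re]; ring

private lemma cms (z : ℂ) : ((starRingEnd ℂ) z * z).re = ‖z‖^2 := by
  simp [Complex.sq_norm, Complex.normSq_apply, Complex.mul_re]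

private lemma cross_abs (u v : ℂ) : |((starRingEnd ℂ) u * v).re| ≤ ‖u‖ * ‖v‖ := by
  calc |((starRingEnd ℂ) u * v).re| ≤ ‖(starRingEnd ℂ) u * v‖ := Complex.abs_re_le_norm _
    _ = ‖u‖ * ‖v‖ := by simp [map_mul]

private lemma shiftS {g : ℤ → ℝ} (hg : Summable g) (c : ℤ) : Summable fun x => g (x + c) :=
  ((Equiv.addRight c).summable_iff).mpr hg

private lemma shiftT (g : ℤ → ℝ) (c : ℤ) : (∑' x, g (x + c)) = ∑' x, g x :=
  (Equiv.addRight c).tsum_eq g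

private lemma crossS {g : ℤ → ℂ} (hg : Summable fun x => ‖g x‖^2) :
    Summable fun x => ((starRingEnd ℂ) (g (x+1)) * g x).re := by
  apply Summable.of_norm_bounded ((shiftS hg 1).add hg)
  intro x
  simp only [Real.norm_eq_abs]
  have h := cross_abs (g (x+1)) (g x)
  nlinarith [h, norm_nonneg (g (x+1)), norm_nonneg (g x), sq_nonneg (‖g (x+1)‖ - ‖g x‖)]

private lemma quad_form (g : ℤ → ℂ) (hg : Summable fun x => ‖g x‖^2) :
    (∑' x : ℤ, starRingEnd ℂ (g x) * (-(lap g x))).re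
      = ∑' x : ℤ, ‖g (x+1) - g x‖^2 := by
  set c : ℤ → ℝ := fun x => ((starRingEnd ℂ) (g (x+1)) * g x).re with hcdef
  have hS1 : Summable fun x => ‖g (x+1)‖^2 := shiftS hg 1
  have hSm : Summable fun x => ‖g (x-1)‖^2 := by
    simpa [sub_eq_add_neg] using shiftS hg (-1)
  have hcS : Summable c := crossS hg
  have hcS' : Summable fun x => c (x-1) := by
    simpa [sub_eq_add_neg] using shiftS hcS (-1)
  have hcshift : (∑' x, c (x-1)) = ∑' x, c x := by
    simpa [sub_eq_add_neg] using shiftT c (-1)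
  -- summability of the complex summand
  have htS : Summable fun x => starRingEnd ℂ (g x) * (-(lap g x)) := by
    apply Summable.of_norm_bounded
      (g := fun x => 4*‖g x‖^2 + ‖g (x+1)‖^2 + ‖g (x-1)‖^2)
      (((hg.mul_left 4).add hS1).add hSm)
    intro x
    have h1 : ‖lap g x‖ ≤ ‖g (x+1)‖ + 2*‖g x‖ + ‖g (x-1)‖ := by
      unfold lap
      calc ‖g (x+1) - 2*g x + g (x-1)‖ ≤ ‖g (x+1) - 2*g x‖ + ‖g (x-1)‖ := norm_add_le _ _
        _ ≤ (‖g (x+1)‖ + ‖2*g x‖) + ‖g (x-1)‖ := by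
            linarith [norm_sub_le (g (x+1)) (2*g x)]
        _ = ‖g (x+1)‖ + 2*‖g x‖ + ‖g (x-1)‖ := by
            rw [norm_mul]; norm_num
    have h2 : ‖starRingEnd ℂ (g x) * (-(lap g x))‖ = ‖g x‖ * ‖lap g x‖ := by
      rw [norm_mul, norm_neg, RingHomIsometric.norm_map]
    rw [h2]
    nlinarith [norm_nonneg (g x), norm_nonneg (g (x+1)), norm_nonneg (g (x-1)),
      norm_nonneg (lap g x), sq_nonneg (‖g x‖ - ‖g (x+1)‖), sq_nonneg (‖g x‖ - ‖g (x-1)‖)]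
  rw [Complex.re_tsum htS]
  have hre : ∀ x : ℤ, (starRingEnd ℂ (g x) * (-(lap g x))).re
      = (2*‖g x‖^2 - c x) - c (x-1) := by
    intro x
    have hsplit : starRingEnd ℂ (g x) * (-(lap g x))
        = 2*((starRingEnd ℂ) (g x) * g x) - (starRingEnd ℂ) (g x) * g (x+1)
          - (starRingEnd ℂ) (g x) * g (x-1) := by
      unfold lap; ring
    rw [hsplit]
    have e1 : ((2:ℂ)*((starRingEnd ℂ) (g x) * g x)).re = 2*‖g x‖^2 := by
      rw [show ((2:ℂ)*((starRingEnd ℂ) (g x) * g x)).re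
          = 2*((starRingEnd ℂ) (g x) * g x).re from by simp, cms]
    have e2 : ((starRingEnd ℂ) (g x) * g (x+1)).re = c x := re_swap _ _
    have e3 : ((starRingEnd ℂ) (g x) * g (x-1)).re = c (x-1) := by
      have : ((starRingEnd ℂ) (g x) * g (x-1)).re
          = ((starRingEnd ℂ) (g ((x-1)+1)) * g (x-1)).re := by norm_num
      rw [this, re_swap]; rw [re_swap]
    simp only [Complex.sub_re, e1, e2, e3]
  rw [tsum_congr hre]
  have lhs_eq : (∑' x, ((2*‖g x‖^2 - c x) - c (x-1)))
      = ((∑' x, 2*‖g x‖^2) - ∑' x, c x) - ∑' x, c (x-1) := by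
    rw [Summable.tsum_sub ((hg.mul_left 2).sub hcS) hcS', Summable.tsum_sub (hg.mul_left 2) hcS]
  have rhs_eq : (∑' x : ℤ, ‖g (x+1) - g x‖^2)
      = ((∑' x, ‖g (x+1)‖^2) + ∑' x, ‖g x‖^2) - ∑' x, 2*c x := by
    rw [← Summable.tsum_add hS1 hg, ← Summable.tsum_sub (hS1.add hg) (hcS.mul_left 2)]
    exact tsum_congr fun x => by rw [nss]
  rw [lhs_eq, rhs_eq, hcshift, shiftT (fun x => ‖g x‖^2) 1, tsum_mul_left, tsum_mul_left]
  ring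

private lemma pt {n : ℕ} (a b : Fin n → ℝ) (ha : ∑ j, (a j)^2 = 1) (hbs : ∑ j, (b j)^2 = 1)
    (u v : ℂ) :
    ∑ j, ‖(b j : ℂ) * v - (a j : ℂ) * u‖^2
      = ‖v - u‖^2 + ((starRingEnd ℂ) v * u).re * ∑ j, (b j - a j)^2 := by
  set c := ((starRingEnd ℂ) v * u).re with hc
  have h1 : ∀ j, ‖(b j : ℂ) * v - (a j : ℂ) * u‖^2
      = (b j)^2*‖v‖^2 + (a j)^2*‖u‖^2 - (a j * b j)*(2*c) := by
    intro j
    rw [nss]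
    have e1 : ((starRingEnd ℂ) ((b j:ℂ)*v) * ((a j:ℂ)*u)).re = (a j * b j)*c := by
      rw [map_mul, Complex.conj_ofReal,
        show (b j:ℂ) * (starRingEnd ℂ) v * ((a j:ℂ)*u)
          = ((a j * b j : ℝ) : ℂ) * ((starRingEnd ℂ) v * u) from by push_cast; ring,
        Complex.re_ofReal_mul]
    rw [e1, norm_mul, norm_mul, mul_pow, mul_pow, Complex.norm_real, Complex.norm_real,
      Real.norm_eq_abs, Real.norm_eq_abs, sq_abs, sq_abs]
    ring
  rw [Finset.sum_congr rfl (fun j _ => h1 j)]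
  have hab : ∑ j, (b j - a j)^2 = 2 - (∑ j, a j * b j)*2 := by
    have h2 : ∀ j, (b j - a j)^2 = (b j)^2 + (a j)^2 - (a j * b j)*2 := fun j => by ring
    rw [Finset.sum_congr rfl (fun j _ => h2 j)]
    simp only [Finset.sum_sub_distrib, Finset.sum_add_distrib, ← Finset.sum_mul, ha, hbs]
    ring
  simp only [Finset.sum_sub_distrib, Finset.sum_add_distrib, ← Finset.sum_mul, ha, hbs]
  rw [nss, hab]
  ring

/-- Discrete IMS localization lower bound. -/
theorem stmt_9 (f : ℤ → ℂ) (hf : Summable fun x => ‖f x‖ ^ 2)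
    (n : ℕ) (ξ : Fin n → ℤ → ℝ) (hb : ∀ j, ∃ M, ∀ x, |ξ j x| ≤ M)
    (hpart : ∀ x, ∑ j, (ξ j x) ^ 2 = 1) :
    (∑' x : ℤ, starRingEnd ℂ (f x) * (-(lap f x))).re ≥
      (∑ j, (∑' x : ℤ, starRingEnd ℂ ((ξ j x : ℂ) * f x) *
          (-(lap (fun y => (ξ j y : ℂ) * f y) x))).re)
        - (1 / 2) * ∑ j, ∑' x : ℤ,
            ((ξ j (x + 1) - ξ j x) ^ 2 + (ξ j x - ξ j (x - 1)) ^ 2) * ‖f x‖ ^ 2 := by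
  have hξ1 : ∀ j x, (ξ j x)^2 ≤ 1 := by
    intro j x
    calc (ξ j x)^2 ≤ ∑ i, (ξ i x)^2 :=
          Finset.single_le_sum (fun i _ => sq_nonneg (ξ i x)) (Finset.mem_univ j)
      _ = 1 := hpart x
  have hξabs : ∀ j x, ‖(ξ j x : ℂ) * f x‖ ≤ ‖f x‖ := by
    intro j x
    rw [norm_mul, Complex.norm_real, Real.norm_eq_abs]
    nlinarith [hξ1 j x, norm_nonneg (f x), abs_nonneg (ξ j x), sq_abs (ξ j x)]
  have hgf : ∀ j : Fin n, Summable fun x => ‖(ξ j x : ℂ) * f x‖^2 := by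
    intro j
    apply Summable.of_nonneg_of_le (fun x => sq_nonneg _) _ hf
    intro x
    have := hξabs j x
    nlinarith [norm_nonneg ((ξ j x : ℂ) * f x)]
  have hform : ∀ j : Fin n, (∑' x : ℤ, starRingEnd ℂ ((ξ j x : ℂ) * f x) *
          (-(lap (fun y => (ξ j y : ℂ) * f y) x))).re
      = ∑' x : ℤ, ‖(ξ j (x+1) : ℂ) * f (x+1) - (ξ j x : ℂ) * f x‖^2 := fun j =>
    quad_form (fun y => (ξ j y : ℂ) * f y) (hgf j)
  set c : ℤ → ℝ := fun x => ((starRingEnd ℂ) (f (x+1)) * f x).re with hcdef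
  set s : ℤ → ℝ := fun x => ∑ j, (ξ j (x+1) - ξ j x)^2 with hsdef
  have hptx : ∀ x : ℤ, ∑ j, ‖(ξ j (x+1) : ℂ) * f (x+1) - (ξ j x : ℂ) * f x‖^2
      = ‖f (x+1) - f x‖^2 + c x * s x :=
    fun x => pt (fun j => ξ j x) (fun j => ξ j (x+1)) (hpart x) (hpart (x+1)) (f x) (f (x+1))
  have hS1 : Summable fun x => ‖f (x+1)‖^2 := shiftS hf 1
  have hQ : Summable fun x => ‖f (x+1) - f x‖^2 := by
    apply Summable.of_nonneg_of_le (fun x => sq_nonneg _) _ ((hS1.mul_left 2).add (hf.mul_left 2))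
    intro x
    nlinarith [norm_sub_le (f (x+1)) (f x), norm_nonneg (f (x+1)), norm_nonneg (f x),
      norm_nonneg (f (x+1) - f x), sq_nonneg (‖f (x+1)‖ - ‖f x‖)]
  have hF : ∀ j : Fin n, Summable fun x => ‖(ξ j (x+1) : ℂ) * f (x+1) - (ξ j x : ℂ) * f x‖^2 := by
    intro j
    apply Summable.of_nonneg_of_le (fun x => sq_nonneg _) _ ((hS1.mul_left 2).add (hf.mul_left 2))
    intro x
    have h1 := hξabs j (x+1)
    have h2 := hξabs j x
    have h3 := norm_sub_le ((ξ j (x+1) : ℂ) * f (x+1)) ((ξ j x : ℂ) * f x)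
    nlinarith [norm_nonneg ((ξ j (x+1) : ℂ) * f (x+1) - (ξ j x : ℂ) * f x),
      norm_nonneg ((ξ j (x+1) : ℂ) * f (x+1)), norm_nonneg ((ξ j x : ℂ) * f x),
      norm_nonneg (f (x+1)), norm_nonneg (f x), sq_nonneg (‖f (x+1)‖ - ‖f x‖)]
  have hcs : Summable fun x => c x * s x := by
    have heq : (fun x => c x * s x)
        = fun x => (∑ j, ‖(ξ j (x+1) : ℂ) * f (x+1) - (ξ j x : ℂ) * f x‖^2)
            - ‖f (x+1) - f x‖^2 := by
      funext x; rw [hptx x]; ring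
    rw [heq]
    exact (summable_sum (fun j _ => hF j)).sub hQ
  have hsum_forms : (∑ j, ∑' x : ℤ, ‖(ξ j (x+1) : ℂ) * f (x+1) - (ξ j x : ℂ) * f x‖^2)
      = (∑' x : ℤ, ‖f (x+1) - f x‖^2) + ∑' x, c x * s x := by
    rw [← Summable.tsum_finsetSum (fun j _ => hF j), tsum_congr hptx, Summable.tsum_add hQ hcs]
  -- error term analysis
  set e : Fin n → ℤ → ℝ := fun j x => (ξ j (x+1) - ξ j x)^2 with hedef
  have he4 : ∀ j x, e j x ≤ 4 := by
    intro j x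
    have := hξ1 j x; have := hξ1 j (x+1)
    simp only [hedef]
    nlinarith
  have he0 : ∀ j x, 0 ≤ e j x := fun j x => sq_nonneg _
  have hE1 : ∀ j : Fin n, Summable fun x => e j x * ‖f x‖^2 := by
    intro j
    apply Summable.of_nonneg_of_le (fun x => mul_nonneg (he0 j x) (sq_nonneg _)) _ (hf.mul_left 4)
    intro x
    have := he4 j x
    nlinarith [sq_nonneg ‖f x‖, he0 j x]
  have hE2 : ∀ j : Fin n, Summable fun x => e j (x-1) * ‖f x‖^2 := by
    intro j
    apply Summable.of_nonneg_of_le (fun x => mul_nonneg (he0 j (x-1)) (sq_nonneg _)) _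
      (hf.mul_left 4)
    intro x
    have := he4 j (x-1)
    nlinarith [sq_nonneg ‖f x‖, he0 j (x-1)]
  have hE2' : ∀ j : Fin n, (∑' x, e j (x-1) * ‖f x‖^2) = ∑' x, e j x * ‖f (x+1)‖^2 := by
    intro j
    have h := shiftT (fun x => e j (x-1) * ‖f x‖^2) 1
    simpa using h.symm
  have hE2S : ∀ j : Fin n, Summable fun x => e j x * ‖f (x+1)‖^2 := by
    intro j
    apply Summable.of_nonneg_of_le (fun x => mul_nonneg (he0 j x) (sq_nonneg _)) _
      (hS1.mul_left 4)
    intro x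
    have := he4 j x
    nlinarith [sq_nonneg ‖f (x+1)‖, he0 j x]
  have hEj : ∀ j : Fin n, (∑' x : ℤ,
        ((ξ j (x + 1) - ξ j x) ^ 2 + (ξ j x - ξ j (x - 1)) ^ 2) * ‖f x‖ ^ 2)
      = (∑' x, e j x * ‖f x‖^2) + ∑' x, e j x * ‖f (x+1)‖^2 := by
    intro j
    rw [← hE2' j, ← Summable.tsum_add (hE1 j) (hE2 j)]
    apply tsum_congr
    intro x
    have hx : ξ j x - ξ j (x-1) = ξ j ((x-1)+1) - ξ j (x-1) := by norm_num
    simp only [hedef, hx]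
    ring
  -- key inequality
  have hsx : ∀ x, 0 ≤ s x := fun x => Finset.sum_nonneg fun j _ => sq_nonneg _
  have hsf : Summable fun x => s x * ‖f x‖^2 := by
    have : (fun x => s x * ‖f x‖^2) = fun x => ∑ j, e j x * ‖f x‖^2 := by
      funext x; simp only [hsdef, hedef, Finset.sum_mul]
    rw [this]; exact summable_sum (fun j _ => hE1 j)
  have hsf1 : Summable fun x => s x * ‖f (x+1)‖^2 := by
    have : (fun x => s x * ‖f (x+1)‖^2) = fun x => ∑ j, e j x * ‖f (x+1)‖^2 := by
      funext x; simp only [hsdef, hedef, Finset.sum_mul]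
    rw [this]; exact summable_sum (fun j _ => hE2S j)
  have hkey : (∑' x, c x * s x)
      ≤ 1/2 * ((∑' x, s x * ‖f x‖^2) + ∑' x, s x * ‖f (x+1)‖^2) := by
    rw [← Summable.tsum_add hsf hsf1, ← tsum_mul_left]
    apply Summable.tsum_le_tsum _ hcs (((hsf.add hsf1)).mul_left (1/2))
    intro x
    have h1 : c x ≤ ‖f (x+1)‖ * ‖f x‖ := le_trans (le_abs_self _) (cross_abs _ _)
    have h2 : 0 ≤ s x := hsx x
    nlinarith [sq_nonneg (‖f (x+1)‖ - ‖f x‖), mul_le_mul_of_nonneg_right h1 h2,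
      mul_nonneg (mul_nonneg (sq_nonneg (‖f (x+1)‖ - ‖f x‖)) h2) (by norm_num : (0:ℝ) ≤ 1/2)]
  -- the sum of error terms
  have hEsum : (∑ j, ∑' x : ℤ,
        ((ξ j (x + 1) - ξ j x) ^ 2 + (ξ j x - ξ j (x - 1)) ^ 2) * ‖f x‖ ^ 2)
      = (∑' x, s x * ‖f x‖^2) + ∑' x, s x * ‖f (x+1)‖^2 := by
    rw [Finset.sum_congr rfl (fun j _ => hEj j), Finset.sum_add_distrib,
      ← Summable.tsum_finsetSum (fun j _ => hE1 j), ← Summable.tsum_finsetSum (fun j _ => hE2S j)]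
    congr 1
    · exact tsum_congr fun x => by simp only [hsdef, hedef, Finset.sum_mul]
    · exact tsum_congr fun x => by simp only [hsdef, hedef, Finset.sum_mul]
  -- assemble
  rw [quad_form f hf, Finset.sum_congr rfl (fun j _ => hform j), hsum_forms, hEsum]
  linarith [hkey]
end

section
/- Sharp IMS-type bound with exponential weights: for any bounded function F: ℤ → ℝ and any φ ∈ ℓ^2(ℤ), Re⟨e^{2F} φ, −Δφ⟩ ≥ − ⟨e^F φ, (cosh(D_+F) + cosh(D_−F) − 2) e^F φ⟩. -/
lemma aux_re_bound (z w : ℂ) : |(starRingEnd ℂ z * w).re| ≤ (‖z‖ ^ 2 + ‖w‖ ^ 2) / 2 := by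
  have h1 : |(starRingEnd ℂ z * w).re| ≤ ‖starRingEnd ℂ z * w‖ := by
    exact Complex.abs_re_le_norm _
  have h2 : ‖starRingEnd ℂ z * w‖ = ‖z‖ * ‖w‖ := by
    rw [norm_mul, RCLike.norm_conj]
  nlinarith [sq_nonneg (‖z‖ - ‖w‖), norm_nonneg z, norm_nonneg w]

lemma aux_re_symm (z w : ℂ) : (starRingEnd ℂ z * w).re = (starRingEnd ℂ w * z).re := by
  simp [Complex.mul_re]; ring

lemma aux_key_s10 (c s t zr zi wr wi : ℝ) (hc : 0 ≤ c) (hst : s * s + t * t = 2 * c * (s * t)) :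
    0 ≤ c * (s * s * (zr ^ 2 + zi ^ 2)) + c * (t * t * (wr ^ 2 + wi ^ 2))
      - s * s * (zr * wr + zi * wi) - t * t * (zr * wr + zi * wi) := by
  have h : c * (s * s * (zr ^ 2 + zi ^ 2)) + c * (t * t * (wr ^ 2 + wi ^ 2))
      - s * s * (zr * wr + zi * wi) - t * t * (zr * wr + zi * wi)
      = c * ((s * zr - t * wr) ^ 2 + (s * zi - t * wi) ^ 2) := by
    linear_combination (-(zr * wr + zi * wi)) * hst
  rw [h]
  positivity


lemma summable_shift (f : ℤ → ℝ) (h : Summable f) (k : ℤ) : Summable fun x => f (x + k) :=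
  ((Equiv.addRight k).summable_iff).2 h

lemma tsum_shift (f : ℤ → ℝ) (k : ℤ) : (∑' x, f (x + k)) = ∑' x, f x :=
  (Equiv.addRight k).tsum_eq f

set_option maxHeartbeats 1000000 in
/-- Sharp IMS-type bound with exponential weights. -/
theorem stmt_10 (φ : ℤ → ℂ) (hφ : Summable fun x => ‖φ x‖ ^ 2)
    (F : ℤ → ℝ) (hF : ∃ M, ∀ x, |F x| ≤ M) :
    (∑' x : ℤ, starRingEnd ℂ ((Real.exp (2 * F x) : ℂ) * φ x) * (-(lap φ x))).re ≥
      - ∑' x : ℤ, (Real.cosh (F (x + 1) - F x) + Real.cosh (F x - F (x - 1)) - 2) *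
          Real.exp (F x) ^ 2 * ‖φ x‖ ^ 2 := by
  obtain ⟨M, hM⟩ := hF
  have hC0 : (0:ℝ) < Real.exp (2 * M) := Real.exp_pos _
  have hexp_le : ∀ x, Real.exp (2 * F x) ≤ Real.exp (2 * M) := by
    intro x
    have := abs_le.1 (hM x)
    exact Real.exp_le_exp.2 (by linarith [this.2])
  have hcosh_le : ∀ s t : ℤ, Real.cosh (F s - F t) ≤ Real.exp (2 * M) := by
    intro s t
    have h1 := abs_le.1 (hM s); have h2 := abs_le.1 (hM t)
    rw [Real.cosh_eq]
    have e1 : Real.exp (F s - F t) ≤ Real.exp (2 * M) := Real.exp_le_exp.2 (by linarith [h1.2, h2.1])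
    have e2 : Real.exp (-(F s - F t)) ≤ Real.exp (2 * M) := Real.exp_le_exp.2 (by linarith [h1.1, h2.2])
    linarith
  have hsh1 : Summable fun x : ℤ => ‖φ (x + 1)‖ ^ 2 := summable_shift (fun x => ‖φ x‖ ^ 2) hφ 1
  have hshm : Summable fun x : ℤ => ‖φ (x - 1)‖ ^ 2 := by
    simpa [sub_eq_add_neg] using summable_shift (fun x => ‖φ x‖ ^ 2) hφ (-1)
  have hA : Summable fun x => Real.exp (2 * F x) * ‖φ x‖ ^ 2 :=
    Summable.of_nonneg_of_le (fun x => by positivity)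
      (fun x => mul_le_mul_of_nonneg_right (hexp_le x) (by positivity)) (hφ.mul_left (Real.exp (2 * M)))
  have hA1 : Summable fun x => Real.exp (2 * F (x + 1)) * ‖φ (x + 1)‖ ^ 2 :=
    summable_shift (fun x => Real.exp (2 * F x) * ‖φ x‖ ^ 2) hA 1
  have hc1 : ∀ x : ℤ, (1:ℝ) ≤ Real.cosh (F (x + 1) - F x) := fun x => Real.one_le_cosh _
  have hbase : Summable fun x : ℤ => (‖φ x‖ ^ 2 + ‖φ (x + 1)‖ ^ 2) / 2 := by
    simpa [div_eq_mul_inv] using (hφ.add hsh1).mul_right (1/2 : ℝ)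
  have hbase' : Summable fun x : ℤ => (‖φ x‖ ^ 2 + ‖φ (x - 1)‖ ^ 2) / 2 := by
    simpa [div_eq_mul_inv] using (hφ.add hshm).mul_right (1/2 : ℝ)
  have hP2 : Summable fun x => Real.exp (2 * F x) * (starRingEnd ℂ (φ x) * φ (x + 1)).re := by
    apply Summable.of_norm_bounded (hbase.mul_left (Real.exp (2 * M)))
    intro x
    rw [Real.norm_eq_abs, abs_mul, abs_of_pos (Real.exp_pos _)]
    exact mul_le_mul (hexp_le x) (aux_re_bound _ _) (abs_nonneg _) hC0.le
  have hP3 : Summable fun x => Real.exp (2 * F (x + 1)) * (starRingEnd ℂ (φ x) * φ (x + 1)).re := by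
    apply Summable.of_norm_bounded (hbase.mul_left (Real.exp (2 * M)))
    intro x
    rw [Real.norm_eq_abs, abs_mul, abs_of_pos (Real.exp_pos _)]
    exact mul_le_mul (hexp_le _) (aux_re_bound _ _) (abs_nonneg _) hC0.le
  have hh : Summable fun x => Real.exp (2 * F x) * (starRingEnd ℂ (φ x) * φ (x - 1)).re := by
    apply Summable.of_norm_bounded (hbase'.mul_left (Real.exp (2 * M)))
    intro x
    rw [Real.norm_eq_abs, abs_mul, abs_of_pos (Real.exp_pos _)]
    exact mul_le_mul (hexp_le x) (aux_re_bound _ _) (abs_nonneg _) hC0.le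
  have hcA : Summable fun x => Real.cosh (F (x + 1) - F x) * (Real.exp (2 * F x) * ‖φ x‖ ^ 2) := by
    apply Summable.of_norm_bounded (hA.mul_left (Real.exp (2 * M)))
    intro x
    rw [Real.norm_eq_abs, abs_mul, abs_of_nonneg (le_trans zero_le_one (hc1 x)),
      abs_of_nonneg (by positivity : (0:ℝ) ≤ Real.exp (2 * F x) * ‖φ x‖ ^ 2)]
    exact mul_le_mul_of_nonneg_right (hcosh_le _ _) (by positivity)
  have hcA1 : Summable fun x =>
      Real.cosh (F (x + 1) - F x) * (Real.exp (2 * F (x + 1)) * ‖φ (x + 1)‖ ^ 2) := by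
    apply Summable.of_norm_bounded (hA1.mul_left (Real.exp (2 * M)))
    intro x
    rw [Real.norm_eq_abs, abs_mul, abs_of_nonneg (le_trans zero_le_one (hc1 x)),
      abs_of_nonneg (by positivity : (0:ℝ) ≤ Real.exp (2 * F (x + 1)) * ‖φ (x + 1)‖ ^ 2)]
    exact mul_le_mul_of_nonneg_right (hcosh_le _ _) (by positivity)
  have hcAm : Summable fun x =>
      Real.cosh (F x - F (x - 1)) * (Real.exp (2 * F x) * ‖φ x‖ ^ 2) := by
    apply Summable.of_norm_bounded (hA.mul_left (Real.exp (2 * M)))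
    intro x
    rw [Real.norm_eq_abs, abs_mul, abs_of_nonneg (le_trans zero_le_one (Real.one_le_cosh _)),
      abs_of_nonneg (by positivity : (0:ℝ) ≤ Real.exp (2 * F x) * ‖φ x‖ ^ 2)]
    exact mul_le_mul_of_nonneg_right (hcosh_le _ _) (by positivity)
  -- summability of the complex series
  have hCsum : Summable fun x : ℤ =>
      starRingEnd ℂ ((Real.exp (2 * F x) : ℂ) * φ x) * (-(lap φ x)) := by
    apply Summable.of_norm_bounded
      (g := fun x => Real.exp (2 * M) *
        ((‖φ x‖ ^ 2 + ‖φ (x + 1)‖ ^ 2) / 2 + 2 * ‖φ x‖ ^ 2 + (‖φ x‖ ^ 2 + ‖φ (x - 1)‖ ^ 2) / 2))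
    · exact Summable.mul_left _ ((hbase.add (hφ.mul_left 2)).add hbase')
    · intro x
      have h1 : ‖starRingEnd ℂ ((Real.exp (2 * F x) : ℂ) * φ x) * (-(lap φ x))‖
          = Real.exp (2 * F x) * ‖φ x‖ * ‖lap φ x‖ := by
        rw [norm_mul, RCLike.norm_conj, norm_neg, norm_mul, Complex.norm_real,
          Real.norm_eq_abs, abs_of_pos (Real.exp_pos _), mul_assoc]
      rw [h1]
      have h2 : ‖lap φ x‖ ≤ ‖φ (x + 1)‖ + 2 * ‖φ x‖ + ‖φ (x - 1)‖ := by
        unfold lap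
        calc ‖φ (x + 1) - 2 * φ x + φ (x - 1)‖
            ≤ ‖φ (x + 1) - 2 * φ x‖ + ‖φ (x - 1)‖ := norm_add_le _ _
          _ ≤ ‖φ (x + 1)‖ + ‖(2:ℂ) * φ x‖ + ‖φ (x - 1)‖ := by
              gcongr; exact norm_sub_le _ _
          _ = ‖φ (x + 1)‖ + 2 * ‖φ x‖ + ‖φ (x - 1)‖ := by
              rw [norm_mul]; norm_num
      have h3 : ‖φ x‖ * ‖lap φ x‖ ≤
          (‖φ x‖ ^ 2 + ‖φ (x + 1)‖ ^ 2) / 2 + 2 * ‖φ x‖ ^ 2 + (‖φ x‖ ^ 2 + ‖φ (x - 1)‖ ^ 2) / 2 := by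
        nlinarith [sq_nonneg (‖φ x‖ - ‖φ (x + 1)‖), sq_nonneg (‖φ x‖ - ‖φ (x - 1)‖),
          norm_nonneg (φ x), norm_nonneg (lap φ x), h2, norm_nonneg (φ (x + 1)),
          norm_nonneg (φ (x - 1))]
      calc Real.exp (2 * F x) * ‖φ x‖ * ‖lap φ x‖
          ≤ Real.exp (2 * M) * (‖φ x‖ * ‖lap φ x‖) := by
            rw [mul_assoc]
            exact mul_le_mul_of_nonneg_right (hexp_le x)
              (mul_nonneg (norm_nonneg _) (norm_nonneg _))
        _ ≤ _ := mul_le_mul_of_nonneg_left h3 hC0.le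
  -- pointwise real part of the summand
  have hsq : ∀ z : ℂ, (starRingEnd ℂ z * z).re = ‖z‖ ^ 2 := by
    intro z
    rw [Complex.sq_norm, Complex.normSq_apply, Complex.mul_re]
    simp [Complex.conj_re, Complex.conj_im]
  have hre : ∀ x : ℤ, (starRingEnd ℂ ((Real.exp (2 * F x) : ℂ) * φ x) * (-(lap φ x))).re
      = 2 * (Real.exp (2 * F x) * ‖φ x‖ ^ 2)
        - Real.exp (2 * F x) * (starRingEnd ℂ (φ x) * φ (x + 1)).re
        - Real.exp (2 * F x) * (starRingEnd ℂ (φ x) * φ (x - 1)).re := by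
    intro x
    have heq : starRingEnd ℂ ((Real.exp (2 * F x) : ℂ) * φ x) * (-(lap φ x))
        = (Real.exp (2 * F x) : ℂ) * (2 * (starRingEnd ℂ (φ x) * φ x)
          - starRingEnd ℂ (φ x) * φ (x + 1) - starRingEnd ℂ (φ x) * φ (x - 1)) := by
      unfold lap
      rw [map_mul, Complex.conj_ofReal]
      ring
    rw [heq, Complex.re_ofReal_mul]
    have h2 : (2 * (starRingEnd ℂ (φ x) * φ x) - starRingEnd ℂ (φ x) * φ (x + 1)
        - starRingEnd ℂ (φ x) * φ (x - 1)).re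
        = 2 * ‖φ x‖ ^ 2 - (starRingEnd ℂ (φ x) * φ (x + 1)).re
          - (starRingEnd ℂ (φ x) * φ (x - 1)).re := by
      rw [Complex.sub_re, Complex.sub_re]
      have : ((2:ℂ) * (starRingEnd ℂ (φ x) * φ x)).re
          = 2 * (starRingEnd ℂ (φ x) * φ x).re := by
        simp [Complex.mul_re]
      rw [this, hsq]
    rw [h2]
    ring
  -- LHS decomposition
  have hLHS : (∑' x : ℤ, starRingEnd ℂ ((Real.exp (2 * F x) : ℂ) * φ x) * (-(lap φ x))).re
      = 2 * (∑' x, Real.exp (2 * F x) * ‖φ x‖ ^ 2)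
        - (∑' x, Real.exp (2 * F x) * (starRingEnd ℂ (φ x) * φ (x + 1)).re)
        - (∑' x, Real.exp (2 * F (x + 1)) * (starRingEnd ℂ (φ x) * φ (x + 1)).re) := by
    rw [Complex.re_tsum hCsum, tsum_congr hre,
      Summable.tsum_sub (((hA.mul_left 2).sub hP2)) hh, Summable.tsum_sub (hA.mul_left 2) hP2, tsum_mul_left]
    congr 1
    rw [← tsum_shift (fun x => Real.exp (2 * F x) * (starRingEnd ℂ (φ x) * φ (x - 1)).re) 1]
    apply tsum_congr
    intro x
    simp only [add_sub_cancel_right]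
    rw [aux_re_symm]
  -- RHS decomposition
  have hRHS : (∑' x : ℤ, (Real.cosh (F (x + 1) - F x) + Real.cosh (F x - F (x - 1)) - 2) *
          Real.exp (F x) ^ 2 * ‖φ x‖ ^ 2)
      = (∑' x, Real.cosh (F (x + 1) - F x) * (Real.exp (2 * F x) * ‖φ x‖ ^ 2))
        + (∑' x, Real.cosh (F (x + 1) - F x) * (Real.exp (2 * F (x + 1)) * ‖φ (x + 1)‖ ^ 2))
        - 2 * (∑' x, Real.exp (2 * F x) * ‖φ x‖ ^ 2) := by
    have hpt : ∀ x : ℤ, (Real.cosh (F (x + 1) - F x) + Real.cosh (F x - F (x - 1)) - 2) *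
          Real.exp (F x) ^ 2 * ‖φ x‖ ^ 2
        = Real.cosh (F (x + 1) - F x) * (Real.exp (2 * F x) * ‖φ x‖ ^ 2)
          + Real.cosh (F x - F (x - 1)) * (Real.exp (2 * F x) * ‖φ x‖ ^ 2)
          - 2 * (Real.exp (2 * F x) * ‖φ x‖ ^ 2) := by
      intro x
      have he : Real.exp (F x) ^ 2 = Real.exp (2 * F x) := by
        rw [sq, ← Real.exp_add]; ring_nf
      rw [he]; ring
    rw [tsum_congr hpt, Summable.tsum_sub (hcA.add hcAm) (hA.mul_left 2), Summable.tsum_add hcA hcAm,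
      tsum_mul_left]
    congr 2
    rw [← tsum_shift (fun x => Real.cosh (F x - F (x - 1)) * (Real.exp (2 * F x) * ‖φ x‖ ^ 2)) 1]
    apply tsum_congr
    intro x
    simp only [add_sub_cancel_right]
  -- the key nonnegative sum
  have hKpt : ∀ x : ℤ, 0 ≤ Real.cosh (F (x + 1) - F x) * (Real.exp (2 * F x) * ‖φ x‖ ^ 2)
      + Real.cosh (F (x + 1) - F x) * (Real.exp (2 * F (x + 1)) * ‖φ (x + 1)‖ ^ 2)
      - Real.exp (2 * F x) * (starRingEnd ℂ (φ x) * φ (x + 1)).re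
      - Real.exp (2 * F (x + 1)) * (starRingEnd ℂ (φ x) * φ (x + 1)).re := by
    intro x
    have hst : Real.exp (F x) * Real.exp (F x) + Real.exp (F (x + 1)) * Real.exp (F (x + 1))
        = 2 * Real.cosh (F (x + 1) - F x) * (Real.exp (F x) * Real.exp (F (x + 1))) := by
      rw [Real.cosh_eq, ← Real.exp_add, ← Real.exp_add, ← Real.exp_add]
      rw [show (2:ℝ) * ((Real.exp (F (x + 1) - F x) + Real.exp (-(F (x + 1) - F x))) / 2) *
          Real.exp (F x + F (x + 1)) =
          Real.exp (F (x + 1) - F x) * Real.exp (F x + F (x + 1)) +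
          Real.exp (-(F (x + 1) - F x)) * Real.exp (F x + F (x + 1)) from by ring,
        ← Real.exp_add, ← Real.exp_add]
      ring_nf
    have hz : ‖φ x‖ ^ 2 = (φ x).re ^ 2 + (φ x).im ^ 2 := by
      rw [Complex.sq_norm, Complex.normSq_apply]; ring
    have hw : ‖φ (x + 1)‖ ^ 2 = (φ (x + 1)).re ^ 2 + (φ (x + 1)).im ^ 2 := by
      rw [Complex.sq_norm, Complex.normSq_apply]; ring
    have hrr : (starRingEnd ℂ (φ x) * φ (x + 1)).re
        = (φ x).re * (φ (x + 1)).re + (φ x).im * (φ (x + 1)).im := by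
      simp [Complex.mul_re]
    have hexp2 : Real.exp (2 * F x) = Real.exp (F x) * Real.exp (F x) := by
      rw [← Real.exp_add]; ring_nf
    have hexp2' : Real.exp (2 * F (x + 1)) = Real.exp (F (x + 1)) * Real.exp (F (x + 1)) := by
      rw [← Real.exp_add]; ring_nf
    rw [hz, hw, hrr, hexp2, hexp2']
    exact aux_key_s10 _ _ _ _ _ _ _ (le_trans zero_le_one (hc1 x)) hst
  have hK : 0 ≤ (∑' x, Real.cosh (F (x + 1) - F x) * (Real.exp (2 * F x) * ‖φ x‖ ^ 2))
      + (∑' x, Real.cosh (F (x + 1) - F x) * (Real.exp (2 * F (x + 1)) * ‖φ (x + 1)‖ ^ 2))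
      - (∑' x, Real.exp (2 * F x) * (starRingEnd ℂ (φ x) * φ (x + 1)).re)
      - (∑' x, Real.exp (2 * F (x + 1)) * (starRingEnd ℂ (φ x) * φ (x + 1)).re) := by
    rw [← Summable.tsum_add hcA hcA1, ← Summable.tsum_sub (hcA.add hcA1) hP2,
      ← Summable.tsum_sub ((hcA.add hcA1).sub hP2) hP3]
    exact tsum_nonneg hKpt
  rw [ge_iff_le, hLHS, hRHS]
  linarith
end

section
/- Splitting estimate for the nonlinear potential: let V: [0,∞) → ℝ be continuous, differentiable on (0,∞), with V(0)=0, and assume there exist 2 < γ₁ ≤ γ₂ < ∞ and C > 0 with |V'(a)| ≤ C(a^{γ₁−1} + a^{γ₂−1}) for all a > 0. Then there is a constant C' (depending only on C, γ₁, γ₂) such that for all complex z, w: |V(|z+w|) − V(|z|) − V(|w|)| ≤ C' · ((|z|+|w|)^{γ₁−2} + (|z|+|w|)^{γ₂−2}) · |z| · |w|. -/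
open Set Filter Topology

lemma aux13 (V : ℝ → ℝ) (hc : ContinuousOn V (Set.Ici 0)) (hV0 : V 0 = 0)
    (γ₁ γ₂ C : ℝ) (h1 : 2 < γ₁) (h12 : γ₁ ≤ γ₂) (hC : 0 < C)
    (hd : ∀ a : ℝ, 0 < a → DifferentiableAt ℝ V a)
    (hder : ∀ a : ℝ, 0 < a → |deriv V a| ≤ C * (a ^ (γ₁ - 1) + a ^ (γ₂ - 1))) :
    ∀ a b : ℝ, 0 ≤ a → a ≤ b →
      |V b - V a| ≤ C * (b ^ (γ₁ - 1) + b ^ (γ₂ - 1)) * (b - a) := by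
  have h10 : (0:ℝ) ≤ γ₁ - 1 := by linarith
  have h20 : (0:ℝ) ≤ γ₂ - 1 := by linarith
  have pos : ∀ a b : ℝ, 0 < a → a ≤ b →
      |V b - V a| ≤ C * (b ^ (γ₁ - 1) + b ^ (γ₂ - 1)) * (b - a) := by
    intro a b ha hab
    have key := Convex.norm_image_sub_le_of_norm_hasDerivWithin_le
      (f := V) (f' := deriv V) (C := C * (b ^ (γ₁ - 1) + b ^ (γ₂ - 1)))
      (s := Icc a b)
      (fun x hx => ((hd x (ha.trans_le hx.1)).hasDerivAt).hasDerivWithinAt)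
      (fun x hx => by
        have hx0 : 0 < x := ha.trans_le hx.1
        refine (hder x hx0).trans ?_
        have e1 : x ^ (γ₁ - 1) ≤ b ^ (γ₁ - 1) := Real.rpow_le_rpow hx0.le hx.2 h10
        have e2 : x ^ (γ₂ - 1) ≤ b ^ (γ₂ - 1) := Real.rpow_le_rpow hx0.le hx.2 h20
        nlinarith)
      (convex_Icc a b) (left_mem_Icc.2 hab) (right_mem_Icc.2 hab)
    simpa [Real.norm_eq_abs, abs_of_nonneg (sub_nonneg.2 hab)] using key
  intro a b ha hab
  rcases ha.lt_or_eq with ha' | ha'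
  · exact pos a b ha' hab
  · subst ha'
    rcases hab.lt_or_eq with hb | hb
    · have tend : Tendsto (fun t => |V b - V t|) (𝓝[>] (0:ℝ)) (𝓝 |V b - V 0|) := by
        have hcw : ContinuousWithinAt V (Ici 0) 0 := hc 0 self_mem_Ici
        have h2 : Tendsto V (𝓝[>] (0:ℝ)) (𝓝 (V 0)) :=
          hcw.tendsto.mono_left (nhdsWithin_mono 0 Ioi_subset_Ici_self)
        exact (tendsto_const_nhds.sub h2).abs
      refine le_of_tendsto tend ?_
      filter_upwards [Ioo_mem_nhdsGT_of_mem ⟨le_refl 0, hb⟩] with t ht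
      refine (pos t b ht.1 ht.2.le).trans ?_
      have hMb : (0:ℝ) ≤ C * (b ^ (γ₁ - 1) + b ^ (γ₂ - 1)) := by positivity
      exact mul_le_mul_of_nonneg_left (by linarith [ht.1.le]) hMb
    · rw [← hb]
      simp
  
/-- Splitting estimate for the nonlinear potential. -/
theorem stmt_13 (V : ℝ → ℝ) (hc : ContinuousOn V (Set.Ici 0)) (hV0 : V 0 = 0)
    (γ₁ γ₂ C : ℝ) (h1 : 2 < γ₁) (h12 : γ₁ ≤ γ₂) (hC : 0 < C)
    (hd : ∀ a : ℝ, 0 < a → DifferentiableAt ℝ V a)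
    (hder : ∀ a : ℝ, 0 < a → |deriv V a| ≤ C * (a ^ (γ₁ - 1) + a ^ (γ₂ - 1))) :
    ∃ C' : ℝ, 0 < C' ∧ ∀ z w : ℂ,
      |V ‖z + w‖ - V ‖z‖ - V ‖w‖| ≤
        C' * ((‖z‖ + ‖w‖) ^ (γ₁ - 2) + (‖z‖ + ‖w‖) ^ (γ₂ - 2)) * ‖z‖ * ‖w‖ := by
  have h10 : (0:ℝ) ≤ γ₁ - 1 := by linarith
  have h20 : (0:ℝ) ≤ γ₂ - 1 := by linarith
  have aux := aux13 V hc hV0 γ₁ γ₂ C h1 h12 hC hd hder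
  refine ⟨4 * C, by positivity, fun z w => ?_⟩
  have hx0 : (0:ℝ) ≤ ‖z‖ := norm_nonneg _
  have hy0 : (0:ℝ) ≤ ‖w‖ := norm_nonneg _
  have hu0 : (0:ℝ) ≤ ‖z + w‖ := norm_nonneg _
  have hus : ‖z + w‖ ≤ ‖z‖ + ‖w‖ := norm_add_le _ _
  by_cases hs : ‖z‖ + ‖w‖ = 0
  · have hz : z = 0 := norm_eq_zero.mp (by linarith)
    have hw : w = 0 := norm_eq_zero.mp (by linarith)
    simp [hz, hw, hV0]
  · have hs' : 0 < ‖z‖ + ‖w‖ := lt_of_le_of_ne (by linarith) (Ne.symm hs)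
    set s := ‖z‖ + ‖w‖ with hsdef
    set M := C * (s ^ (γ₁ - 1) + s ^ (γ₂ - 1)) with hM
    have L : ∀ a b : ℝ, 0 ≤ a → 0 ≤ b → a ≤ s → b ≤ s →
        |V b - V a| ≤ M * |b - a| := by
      intro a b ha hb has hbs
      have mono : ∀ c : ℝ, 0 ≤ c → c ≤ s →
          C * (c ^ (γ₁ - 1) + c ^ (γ₂ - 1)) ≤ M := by
        intro c hc0 hcs
        have e1 : c ^ (γ₁ - 1) ≤ s ^ (γ₁ - 1) := Real.rpow_le_rpow hc0 hcs h10
        have e2 : c ^ (γ₂ - 1) ≤ s ^ (γ₂ - 1) := Real.rpow_le_rpow hc0 hcs h20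
        rw [hM]; nlinarith
      rcases le_total a b with h | h
      · calc |V b - V a| ≤ C * (b ^ (γ₁ - 1) + b ^ (γ₂ - 1)) * (b - a) := aux a b ha h
          _ ≤ M * |b - a| := by
            rw [abs_of_nonneg (sub_nonneg.2 h)]
            exact mul_le_mul_of_nonneg_right (mono b hb hbs) (by linarith)
      · rw [abs_sub_comm]
        calc |V a - V b| ≤ C * (a ^ (γ₁ - 1) + a ^ (γ₂ - 1)) * (a - b) := aux b a hb h
          _ ≤ M * |b - a| := by
            rw [abs_sub_comm, abs_of_nonneg (sub_nonneg.2 h)]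
            exact mul_le_mul_of_nonneg_right (mono a ha has) (by linarith)
    have hM0 : 0 ≤ M := by
      have := Real.rpow_nonneg hs'.le (γ₁ - 1)
      have := Real.rpow_nonneg hs'.le (γ₂ - 1)
      rw [hM]; positivity
    have hux : |‖z + w‖ - ‖z‖| ≤ ‖w‖ := by
      simpa using abs_norm_sub_norm_le (z + w) z
    have huy : |‖z + w‖ - ‖w‖| ≤ ‖z‖ := by
      simpa using abs_norm_sub_norm_le (z + w) w
    have A1 : |V ‖z + w‖ - V ‖z‖| ≤ M * ‖w‖ :=
      (L ‖z‖ ‖z + w‖ hx0 hu0 (by linarith) hus).trans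
        (mul_le_mul_of_nonneg_left hux hM0)
    have A2 : |V ‖w‖| ≤ M * ‖w‖ := by
      have := L 0 ‖w‖ le_rfl hy0 hs'.le (by linarith)
      simpa [hV0, abs_of_nonneg hy0] using this
    have B1 : |V ‖z + w‖ - V ‖w‖| ≤ M * ‖z‖ :=
      (L ‖w‖ ‖z + w‖ hy0 hu0 (by linarith) hus).trans
        (mul_le_mul_of_nonneg_left huy hM0)
    have B2 : |V ‖z‖| ≤ M * ‖z‖ := by
      have := L 0 ‖z‖ le_rfl hx0 hs'.le (by linarith)
      simpa [hV0, abs_of_nonneg hx0] using this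
    have Ey : |V ‖z + w‖ - V ‖z‖ - V ‖w‖| ≤ 2 * M * ‖w‖ := by
      calc |V ‖z + w‖ - V ‖z‖ - V ‖w‖| ≤ |V ‖z + w‖ - V ‖z‖| + |V ‖w‖| :=
            abs_sub _ _
        _ ≤ M * ‖w‖ + M * ‖w‖ := add_le_add A1 A2
        _ = 2 * M * ‖w‖ := by ring
    have Ex : |V ‖z + w‖ - V ‖z‖ - V ‖w‖| ≤ 2 * M * ‖z‖ := by
      have h' : V ‖z + w‖ - V ‖z‖ - V ‖w‖ = (V ‖z + w‖ - V ‖w‖) - V ‖z‖ := by ring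
      rw [h']
      calc |(V ‖z + w‖ - V ‖w‖) - V ‖z‖| ≤ |V ‖z + w‖ - V ‖w‖| + |V ‖z‖| :=
            abs_sub _ _
        _ ≤ M * ‖z‖ + M * ‖z‖ := add_le_add B1 B2
        _ = 2 * M * ‖z‖ := by ring
    -- now combine
    have hr1 : s ^ (γ₁ - 1) = s ^ (γ₁ - 2) * s := by
      rw [show γ₁ - 1 = (γ₁ - 2) + 1 by ring, Real.rpow_add_one hs'.ne']
    have hr2 : s ^ (γ₂ - 1) = s ^ (γ₂ - 2) * s := by
      rw [show γ₂ - 1 = (γ₂ - 2) + 1 by ring, Real.rpow_add_one hs'.ne']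
    have p1 : (0:ℝ) ≤ s ^ (γ₁ - 2) := Real.rpow_nonneg hs'.le _
    have p2 : (0:ℝ) ≤ s ^ (γ₂ - 2) := Real.rpow_nonneg hs'.le _
    rcases le_total ‖z‖ ‖w‖ with hxy | hxy
    · refine Ex.trans ?_
      have key : s * ‖z‖ ≤ 2 * (‖z‖ * ‖w‖) := by rw [hsdef]; nlinarith
      have e1 := mul_le_mul_of_nonneg_left key p1
      have e2 := mul_le_mul_of_nonneg_left key p2
      rw [hM, hr1, hr2]
      linarith [mul_le_mul_of_nonneg_left e1 hC.le, mul_le_mul_of_nonneg_left e2 hC.le]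
    · refine Ey.trans ?_
      have key : s * ‖w‖ ≤ 2 * (‖z‖ * ‖w‖) := by rw [hsdef]; nlinarith
      have e1 := mul_le_mul_of_nonneg_left key p1
      have e2 := mul_le_mul_of_nonneg_left key p2
      rw [hM, hr1, hr2]
      linarith [mul_le_mul_of_nonneg_left e1 hC.le, mul_le_mul_of_nonneg_left e2 hC.le]
end

section
/- Suppose β: ℕ → [0,∞) is nonincreasing, vanishes at infinity, and satisfies the self-consistency bound β(n+m) ≤ C(β(n)^θ + (m+1)^{−α(m+1)}) for all n, m ∈ ℕ, for fixed constants C > 0, θ > 1, and 0 < α < 1/2. Then there exist ν > 0 and C' > 0 such that β(n) ≤ C' (n+1)^{−ν(n+1)} for all n ∈ ℕ. -/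
set_option maxHeartbeats 1000000

open Real Filter

lemma xlogx_mono_aux {y x : ℝ} (hy : 1 ≤ y) (hxy : y ≤ x) :
    y * Real.log y ≤ x * Real.log x := by
  have h1 : 0 ≤ Real.log y := Real.log_nonneg hy
  have h2 : Real.log y ≤ Real.log x := Real.log_le_log (by linarith) hxy
  nlinarith

lemma ev_lemma_aux (a b L : ℝ) (ha : 0 < a) :
    ∃ J : ℕ, ∀ j : ℕ, J ≤ j →
      L + b * ((j:ℝ)+1) ≤ a * (((j:ℝ)+1) * Real.log ((j:ℝ)+1)) := by
  have t0 : Tendsto (fun j : ℕ => (j:ℝ)+1) atTop atTop :=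
    tendsto_atTop_add_const_right _ 1 tendsto_natCast_atTop_atTop
  have t1 : Tendsto (fun j : ℕ => Real.log ((j:ℝ)+1)) atTop atTop :=
    Real.tendsto_log_atTop.comp t0
  have t2 : Tendsto (fun j : ℕ => a * Real.log ((j:ℝ)+1) + (-b)) atTop atTop :=
    tendsto_atTop_add_const_right _ (-b) (t1.const_mul_atTop ha)
  have t3 : Tendsto (fun j : ℕ => ((j:ℝ)+1) * (a * Real.log ((j:ℝ)+1) + (-b)))
      atTop atTop := t0.atTop_mul_atTop₀ t2
  obtain ⟨J, hJ⟩ := eventually_atTop.mp (t3.eventually_ge_atTop L)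
  exact ⟨J, fun j hj => by nlinarith [hJ j hj]⟩


lemma arith1_aux (θ δ ν r L u x : ℝ)
    (hν : 0 < ν) (hθ0 : 0 < θ) (hδ : 0 < δ) (hθr : 1 + δ ≤ θ * r)
    (hr0 : 0 < r) (hu0 : 0 < u) (hy1 : 1 ≤ r * u) (hx : r * u ≤ x)
    (hlogr : -Real.log 2 ≤ Real.log r)
    (hE1 : L + (1+δ) * ν * Real.log 2 * u ≤ δ * ν * (u * Real.log u)) :
    L + ν * u * Real.log u ≤ θ * (ν * x * Real.log x) := by
  have hxl := xlogx_mono_aux hy1 hx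
  have hlogru : Real.log (r*u) = Real.log r + Real.log u :=
    Real.log_mul (ne_of_gt hr0) (ne_of_gt hu0)
  have hlog0 : 0 ≤ Real.log (r*u) := Real.log_nonneg hy1
  have f2 : (1+δ) * (ν * (u * Real.log (r*u))) ≤ θ * ν * ((r*u) * Real.log (r*u)) := by
    have h0 : 0 ≤ ν * (u * Real.log (r*u)) :=
      mul_nonneg hν.le (mul_nonneg hu0.le hlog0)
    calc (1+δ) * (ν * (u * Real.log (r*u))) ≤ (θ*r) * (ν * (u * Real.log (r*u))) :=
          mul_le_mul_of_nonneg_right hθr h0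
      _ = θ * ν * ((r*u) * Real.log (r*u)) := by ring
  have f1 : θ * ν * ((r*u) * Real.log (r*u)) ≤ θ * ν * (x * Real.log x) :=
    mul_le_mul_of_nonneg_left hxl (by positivity)
  have f3 := f2.trans f1
  rw [hlogru] at f3
  have h3 : 0 ≤ (1+δ) * ν * u := by positivity
  have f4 := mul_le_mul_of_nonneg_left hlogr h3
  nlinarith [f3, f4, hE1]

lemma arith2_aux (α ν s L u x Kr : ℝ)
    (hα : 0 < α) (hs : 0 < s) (hν : ν = α * s / 2)
    (hu0 : 0 < u) (hy1 : 1 ≤ s * u) (hx : s * u ≤ x)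
    (hlogs : Real.log (s*u) = -Real.log Kr + Real.log u)
    (hE2 : L + α * s * Real.log Kr * u ≤ α * s / 2 * (u * Real.log u)) :
    L + ν * u * Real.log u ≤ α * (x * Real.log x) := by
  have hxl := xlogx_mono_aux hy1 hx
  have h1 : α * ((s*u) * Real.log (s*u)) ≤ α * (x * Real.log x) :=
    mul_le_mul_of_nonneg_left hxl hα.le
  rw [hlogs] at h1
  subst hν
  nlinarith [h1, hE2]


theorem stmt_17 (β : ℕ → ℝ) (hpos : ∀ n, 0 ≤ β n) (hmono : Antitone β)
    (hlim : Filter.Tendsto β Filter.atTop (nhds 0))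
    (C θ α : ℝ) (hC : 0 < C) (hθ : 1 < θ) (hα1 : 0 < α) (hα2 : α < 1 / 2)
    (hself : ∀ n m : ℕ,
      β (n + m) ≤ C * (β n ^ θ + ((m : ℝ) + 1) ^ (-(α * ((m : ℝ) + 1))))) :
    ∃ ν : ℝ, 0 < ν ∧ ∃ C' : ℝ, 0 < C' ∧
      ∀ n : ℕ, β n ≤ C' * ((n : ℝ) + 1) ^ (-(ν * ((n : ℝ) + 1))) := by
  have hθ1 : (0:ℝ) < θ - 1 := by linarith
  -- choose K
  set K : ℕ := max 2 ⌈2*θ/(θ-1)⌉₊ with hKdef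
  have hK2 : 2 ≤ K := le_max_left _ _
  have hK0R : (0:ℝ) < (K:ℝ) := by
    have : (2:ℝ) ≤ (K:ℝ) := by exact_mod_cast hK2
    linarith
  have hKθ : 2*θ/(θ-1) ≤ (K:ℝ) :=
    le_trans (Nat.le_ceil _) (by exact_mod_cast Nat.cast_le.2 (le_max_right 2 _))
  have h2θ : 2*θ ≤ (K:ℝ)*(θ-1) := by
    rw [div_le_iff₀ hθ1] at hKθ; linarith
  set s : ℝ := 1/(K:ℝ) with hsdef
  set r : ℝ := 1 - s with hrdef
  have hs0 : 0 < s := by positivity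
  have hsK : s * (K:ℝ) = 1 := by
    rw [hsdef, one_div, inv_mul_cancel₀ (ne_of_gt hK0R)]
  have hs12 : s ≤ 1/2 := by
    rw [hsdef, div_le_div_iff₀ hK0R (by norm_num)]
    have : (2:ℝ) ≤ (K:ℝ) := by exact_mod_cast hK2
    linarith
  have hr12 : 1/2 ≤ r := by rw [hrdef]; linarith
  have hr1 : r ≤ 1 := by rw [hrdef]; linarith
  have hr0 : 0 < r := by linarith
  set δ : ℝ := (θ-1)/2 with hδdef
  have hδ0 : 0 < δ := by positivity
  have hθr : 1 + δ ≤ θ * r := by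
    have hθK : θ * s ≤ (θ-1)/2 := by
      have : θ * s * (K:ℝ) = θ := by rw [mul_assoc, hsK, mul_one]
      nlinarith [mul_pos (mul_pos (by linarith : (0:ℝ) < θ) hs0) hK0R]
    rw [hrdef]; nlinarith
  set ν : ℝ := α * s / 2 with hνdef
  have hν0 : 0 < ν := by positivity
  set L : ℝ := Real.log 2 + Real.log C with hLdef
  obtain ⟨J1, hJ1⟩ := ev_lemma_aux (δ*ν) ((1+δ)*ν*Real.log 2) L (by positivity)
  obtain ⟨J2, hJ2⟩ := ev_lemma_aux (α*s/2) (α*s*Real.log (K:ℝ)) L (by positivity)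
  set J' : ℕ := max (max J1 J2) K with hJ'def
  -- the comparison function
  set T : ℕ → ℝ := fun j => Real.exp (-(ν * ((j:ℝ)+1) * Real.log ((j:ℝ)+1))) with hTdef
  have hTpos : ∀ j, 0 < T j := fun j => Real.exp_pos _
  have hTanti : ∀ i j : ℕ, i ≤ j → T j ≤ T i := by
    intro i j hij
    apply Real.exp_le_exp.mpr
    have hij' : (i:ℝ)+1 ≤ (j:ℝ)+1 := by exact_mod_cast Nat.add_le_add_right hij 1
    have h := xlogx_mono_aux (y := (i:ℝ)+1) (x := (j:ℝ)+1)
      (by have := Nat.cast_nonneg (α := ℝ) i; linarith) hij'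
    nlinarith
  -- choose N₀
  obtain ⟨N₀, hN₀⟩ : ∃ N₀ : ℕ, β N₀ ≤ T J' := by
    obtain ⟨N₀, h⟩ := eventually_atTop.mp (hlim.eventually_lt_const (hTpos J'))
    exact ⟨N₀, (h N₀ le_rfl).le⟩
  -- main induction
  have main : ∀ j : ℕ, β (N₀ + j) ≤ T j := by
    intro j
    induction j using Nat.strong_induction_on with
    | _ j IH =>
      by_cases hj : j ≤ J'
      · calc β (N₀ + j) ≤ β N₀ := hmono (Nat.le_add_right _ _)
          _ ≤ T J' := hN₀
          _ ≤ T j := hTanti j J' hj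
      · push_neg at hj
        have hjK : K ≤ j := le_trans (le_max_right _ _) hj.le
        have hjJ1 : J1 ≤ j := le_trans (le_trans (le_max_left _ _) (le_max_left _ _)) hj.le
        have hjJ2 : J2 ≤ j := le_trans (le_trans (le_max_right _ _) (le_max_left _ _)) hj.le
        set m : ℕ := j / K with hmdef
        have hm1 : 1 ≤ m := (Nat.one_le_div_iff (by omega)).mpr hjK
        have hmj : m < j := Nat.div_lt_self (by omega) (by omega)
        set n' : ℕ := j - m with hn'def
        have hmn : n' + m = j := Nat.sub_add_cancel hmj.le
        have hn'j : n' < j := by omega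
        -- real estimates
        have hjR : (2:ℝ) ≤ (j:ℝ) := by exact_mod_cast by omega
        have hlj : 0 ≤ Real.log ((j:ℝ)+1) := Real.log_nonneg (by linarith)
        have hcastn' : (n':ℝ) = (j:ℝ) - (m:ℝ) := by
          rw [hn'def]; exact_mod_cast Nat.cast_sub hmj.le
        have hms : (m:ℝ) ≤ (j:ℝ) * s := by
          have := Nat.cast_div_le (m := j) (n := K) (α := ℝ)
          rw [hsdef]; rw [hmdef]
          calc ((j/K : ℕ):ℝ) ≤ (j:ℝ)/(K:ℝ) := this
            _ = (j:ℝ) * (1/(K:ℝ)) := by ring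
        have hn1 : r * ((j:ℝ)+1) ≤ (n':ℝ)+1 := by
          have : (j:ℝ) * r ≤ (n':ℝ) := by rw [hcastn', hrdef]; nlinarith
          nlinarith
        have hn2 : (n':ℝ)+1 ≤ (j:ℝ)+1 := by
          have h := Nat.add_le_add_right hn'j.le 1
          exact_mod_cast h
        have hm1R : s * ((j:ℝ)+1) ≤ (m:ℝ)+1 := by
          have hnat : j < (m + 1) * K := by
            rw [← Nat.div_lt_iff_lt_mul (by omega : 0 < K)]; omega
          have hcast : (j:ℝ)+1 ≤ ((m:ℝ)+1) * (K:ℝ) := by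
            have : (j+1 : ℕ) ≤ (m+1) * K := hnat
            exact_mod_cast this
          nlinarith
        have hkey := hself (N₀ + n') m
        rw [show N₀ + n' + m = N₀ + j by omega] at hkey
        -- bound term 1
        have hterm1 : C * β (N₀ + n') ^ θ ≤ 1/2 * T j := by
          have hIH := IH n' hn'j
          have hb1 : β (N₀ + n') ^ θ ≤
              Real.exp (-(ν * ((n':ℝ)+1) * Real.log ((n':ℝ)+1)) * θ) := by
            rw [Real.exp_mul]
            exact Real.rpow_le_rpow (hpos _) hIH (by linarith)
          have hy1 : (1:ℝ) ≤ r * ((j:ℝ)+1) := by nlinarith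
          have hxl := xlogx_mono_aux hy1 hn1
          have hlogrj : Real.log (r*((j:ℝ)+1)) = Real.log r + Real.log ((j:ℝ)+1) :=
            Real.log_mul (ne_of_gt hr0) (by positivity)
          have hlogy0 : 0 ≤ Real.log (r*((j:ℝ)+1)) := Real.log_nonneg hy1
          have hlogr : -Real.log 2 ≤ Real.log r := by
            have h1 : Real.log (1/2 : ℝ) ≤ Real.log r :=
              Real.log_le_log (by norm_num) hr12
            rw [one_div, Real.log_inv] at h1
            linarith
          have hE1 := hJ1 j hjJ1
          -- goal: L + ν(j+1)log(j+1) ≤ θ * (ν * (n'+1) * log(n'+1))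
          have harith : L + ν * ((j:ℝ)+1) * Real.log ((j:ℝ)+1) ≤
              θ * (ν * ((n':ℝ)+1) * Real.log ((n':ℝ)+1)) :=
            arith1_aux θ δ ν r L ((j:ℝ)+1) ((n':ℝ)+1) hν0 (by linarith) hδ0 hθr hr0
              (by linarith) hy1 hn1 hlogr hE1
          calc C * β (N₀ + n') ^ θ
              ≤ C * Real.exp (-(ν * ((n':ℝ)+1) * Real.log ((n':ℝ)+1)) * θ) :=
                mul_le_mul_of_nonneg_left hb1 hC.le
            _ = Real.exp (Real.log C + -(ν * ((n':ℝ)+1) * Real.log ((n':ℝ)+1)) * θ) := by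
                rw [Real.exp_add, Real.exp_log hC]
            _ ≤ Real.exp (-Real.log 2 + -(ν * ((j:ℝ)+1) * Real.log ((j:ℝ)+1))) := by
                apply Real.exp_le_exp.mpr
                rw [hLdef] at harith; linarith only [harith]
            _ = 1/2 * T j := by
                rw [Real.exp_add, Real.exp_neg, Real.exp_log (by norm_num : (0:ℝ) < 2)]
                norm_num [hTdef]
        -- bound term 2
        have hterm2 : C * ((m:ℝ)+1) ^ (-(α * ((m:ℝ)+1))) ≤ 1/2 * T j := by
          have hrpow : ((m:ℝ)+1) ^ (-(α * ((m:ℝ)+1))) =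
              Real.exp (Real.log ((m:ℝ)+1) * (-(α * ((m:ℝ)+1)))) :=
            Real.rpow_def_of_pos (by positivity) _
          have hy1 : (1:ℝ) ≤ s * ((j:ℝ)+1) := by
            have : (K:ℝ) ≤ (j:ℝ)+1 := by
              have : (K:ℕ) ≤ j+1 := by omega
              exact_mod_cast this
            nlinarith
          have hxl := xlogx_mono_aux hy1 hm1R
          have hlogsj : Real.log (s*((j:ℝ)+1)) = -Real.log (K:ℝ) + Real.log ((j:ℝ)+1) := by
            rw [Real.log_mul (ne_of_gt hs0) (by positivity), hsdef, one_div, Real.log_inv]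
          have hE2 := hJ2 j hjJ2
          have harith : L + ν * ((j:ℝ)+1) * Real.log ((j:ℝ)+1) ≤
              α * (((m:ℝ)+1) * Real.log ((m:ℝ)+1)) :=
            arith2_aux α ν s L ((j:ℝ)+1) ((m:ℝ)+1) (K:ℝ) hα1 hs0 hνdef
              (by linarith) hy1 hm1R hlogsj hE2
          calc C * ((m:ℝ)+1) ^ (-(α * ((m:ℝ)+1)))
              = Real.exp (Real.log C + Real.log ((m:ℝ)+1) * (-(α * ((m:ℝ)+1)))) := by
                rw [hrpow, Real.exp_add, Real.exp_log hC]
            _ ≤ Real.exp (-Real.log 2 + -(ν * ((j:ℝ)+1) * Real.log ((j:ℝ)+1))) := by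
                apply Real.exp_le_exp.mpr
                rw [hLdef] at harith; linarith only [harith]
            _ = 1/2 * T j := by
                rw [Real.exp_add, Real.exp_neg, Real.exp_log (by norm_num : (0:ℝ) < 2)]
                norm_num [hTdef]
        calc β (N₀ + j) ≤ C * (β (N₀ + n') ^ θ + ((m:ℝ)+1) ^ (-(α * ((m:ℝ)+1)))) := hkey
          _ = C * β (N₀ + n') ^ θ + C * ((m:ℝ)+1) ^ (-(α * ((m:ℝ)+1))) := by ring
          _ ≤ 1/2 * T j + 1/2 * T j := add_le_add hterm1 hterm2
          _ = T j := by ring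
  -- conclusion
  set ν' : ℝ := ν / 4 with hν'def
  have hν'0 : 0 < ν' := by positivity
  set M : ℕ := 2 * N₀ + 4 with hMdef
  set C' : ℝ := (β 0 + 1) * Real.exp (ν' * ((M:ℝ)+1) * Real.log ((M:ℝ)+1)) with hC'def
  have hlogM : 0 ≤ Real.log ((M:ℝ)+1) := Real.log_nonneg (by have := Nat.cast_nonneg (α := ℝ) M; linarith)
  have hexpM : 1 ≤ Real.exp (ν' * ((M:ℝ)+1) * Real.log ((M:ℝ)+1)) :=
    Real.one_le_exp (mul_nonneg (by positivity) hlogM)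
  have hC'pos : 0 < C' := by
    rw [hC'def]
    have h0 := hpos 0
    nlinarith [Real.exp_pos (ν' * ((M:ℝ)+1) * Real.log ((M:ℝ)+1))]
  refine ⟨ν', hν'0, C', hC'pos, fun n => ?_⟩
  rw [Real.rpow_def_of_pos (by positivity : (0:ℝ) < (n:ℝ)+1)]
  by_cases hn : n < M
  · have h1 : β n ≤ β 0 := hmono (Nat.zero_le _)
    have h2 : ν' * ((n:ℝ)+1) * Real.log ((n:ℝ)+1) ≤ ν' * ((M:ℝ)+1) * Real.log ((M:ℝ)+1) := by
      have hnM : (n:ℝ)+1 ≤ (M:ℝ)+1 := by exact_mod_cast Nat.add_le_add_right hn.le 1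
      have := xlogx_mono_aux (y := (n:ℝ)+1) (x := (M:ℝ)+1)
        (by have := Nat.cast_nonneg (α := ℝ) n; linarith) hnM
      nlinarith
    have h3 : 1 ≤ Real.exp (ν' * ((M:ℝ)+1) * Real.log ((M:ℝ)+1)) *
        Real.exp (Real.log ((n:ℝ)+1) * (-(ν' * ((n:ℝ)+1)))) := by
      rw [← Real.exp_add]
      apply Real.one_le_exp
      linarith only [h2]
    calc β n ≤ β 0 + 1 := by linarith [h1]
      _ ≤ (β 0 + 1) * (Real.exp (ν' * ((M:ℝ)+1) * Real.log ((M:ℝ)+1)) *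
            Real.exp (Real.log ((n:ℝ)+1) * (-(ν' * ((n:ℝ)+1))))) :=
          le_mul_of_one_le_right (by linarith [hpos 0]) h3
      _ = C' * Real.exp (Real.log ((n:ℝ)+1) * (-(ν' * ((n:ℝ)+1)))) := by
          rw [hC'def]; ring
  · push_neg at hn
    set j : ℕ := n - N₀ with hjdef
    have hNn : N₀ ≤ n := by omega
    have hNj : N₀ + j = n := by omega
    have hjcast : (j:ℝ) = (n:ℝ) - (N₀:ℝ) := by
      rw [hjdef, Nat.cast_sub hNn]
    have hN₀n : 2 * (N₀:ℝ) + 4 ≤ (n:ℝ) := by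
      have : (2*N₀+4 : ℕ) ≤ n := hn
      exact_mod_cast this
    have hhalf : ((n:ℝ)+1)/2 ≤ (j:ℝ)+1 := by rw [hjcast]; linarith
    have hn4 : (4:ℝ) ≤ (n:ℝ)+1 := by linarith
    have hlog4 : Real.log 4 ≤ Real.log ((n:ℝ)+1) := Real.log_le_log (by norm_num) hn4
    have hlog42 : Real.log (4:ℝ) = 2 * Real.log 2 := by
      rw [show (4:ℝ) = 2*2 by norm_num, Real.log_mul (by norm_num) (by norm_num)]; ring
    have hlogn : 0 ≤ Real.log ((n:ℝ)+1) := Real.log_nonneg (by linarith)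
    have hlogj : Real.log ((n:ℝ)+1) / 2 ≤ Real.log ((j:ℝ)+1) := by
      have h1 : Real.log (((n:ℝ)+1)/2) ≤ Real.log ((j:ℝ)+1) :=
        Real.log_le_log (by linarith) hhalf
      rw [Real.log_div (by linarith) (by norm_num)] at h1
      linarith
    have hexps : ν' * ((n:ℝ)+1) * Real.log ((n:ℝ)+1) ≤ ν * ((j:ℝ)+1) * Real.log ((j:ℝ)+1) := by
      have hj0 : (0:ℝ) ≤ (j:ℝ)+1 := by positivity
      have := mul_le_mul hhalf hlogj (by linarith) hj0
      rw [hν'def]; nlinarith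
    calc β n = β (N₀ + j) := by rw [hNj]
      _ ≤ T j := main j
      _ ≤ Real.exp (Real.log ((n:ℝ)+1) * (-(ν' * ((n:ℝ)+1)))) :=
          Real.exp_le_exp.mpr (by linarith only [hexps])
      _ ≤ C' * Real.exp (Real.log ((n:ℝ)+1) * (-(ν' * ((n:ℝ)+1)))) := by
          have h1 : 1 ≤ C' := by
            rw [hC'def]
            calc (1:ℝ) = 1 * 1 := by ring
              _ ≤ (β 0 + 1) * Real.exp (ν' * ((M:ℝ)+1) * Real.log ((M:ℝ)+1)) :=
                mul_le_mul (by linarith [hpos 0]) hexpM (by norm_num) (by linarith [hpos 0])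
          exact le_mul_of_one_le_left (Real.exp_pos _).le h1
end
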